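/- arXiv:1309.7229 — 9 statements merged into one kernel-verified Lean document; each statement's English description precedes it below -/
import Mathlib

section
/- Let k be a field and n ≥ 1. If a = (a_1, …, a_n) ∈ ℤ^n satisfies gcd(a_1, …, a_n) = 1, then the principal ideal generated by X^a − 1 in the Laurent polynomial ring k[x_1^{±1}, …, x_n^{±1}] is a prime ideal. -/
/-!
The quotient map `ℤⁿ → ℤⁿ ⧸ ℤa` induces a surjection `k[ℤⁿ] → k[ℤⁿ ⧸ ℤa]` whose kernel is
generated by `Xᵃ - 1`: sending the class of `g` to `Xᵍ` modulo `Xᵃ - 1` is well defined because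
`Xᵃ` becomes `1`, and it inverts the surjection on the quotient ring. Since `a` is primitive,
`ℤⁿ ⧸ ℤa` is a finitely generated torsion-free abelian group, so its group algebra over a field
is a domain.
-/

open AddMonoidAlgebra

lemma QuotientAddGroup.isAddTorsionFree_of_nsmul_mem {G : Type*} [AddCommGroup G]
    {H : AddSubgroup G} (hH : ∀ ⦃m : ℕ⦄ ⦃x : G⦄, m ≠ 0 → m • x ∈ H → x ∈ H) :
    IsAddTorsionFree (G ⧸ H) := by
  refine ⟨fun m hm x y hxy => ?_⟩
  induction x using QuotientAddGroup.induction_on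
  induction y using QuotientAddGroup.induction_on
  dsimp only at hxy
  rw [← QuotientAddGroup.mk_nsmul, ← QuotientAddGroup.mk_nsmul, QuotientAddGroup.eq,
    ← smul_neg, ← smul_add] at hxy
  exact QuotientAddGroup.eq.2 (hH hm hxy)

lemma Finsupp.mem_zmultiples_of_nsmul_mem {ι : Type*} [Fintype ι] {a : ι →₀ ℤ}
    (ha : Finset.univ.gcd a = 1) {m : ℕ} {x : ι →₀ ℤ} (hm : m ≠ 0)
    (hmx : m • x ∈ AddSubgroup.zmultiples a) : x ∈ AddSubgroup.zmultiples a := by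
  obtain ⟨c, hc⟩ := hmx
  have hdvd : (m : ℤ) ∣ c := by
    have hcoord : ∀ i ∈ Finset.univ, (m : ℤ) ∣ c * a i := fun i _ =>
      ⟨x i, by simpa using congr($hc i)⟩
    simpa [Finset.gcd_mul_left, ha, dvd_normalize_iff] using Finset.dvd_gcd hcoord
  obtain ⟨d, rfl⟩ := hdvd
  refine ⟨d, nsmul_right_injective hm ?_⟩
  simpa [mul_smul] using hc

namespace AddMonoidAlgebra

section ZMultiplesQuotient

variable (k : Type*) [CommRing k] {G : Type*} [AddCommGroup G] (a : G)

noncomputable def singleUnitsQuotient :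
    G →+ Additive (k[G] ⧸ Ideal.span {(single a 1 : k[G]) - 1})ˣ :=
  MonoidHom.toAdditiveRight ((Ideal.Quotient.mk _).toMonoidHom.comp (of k G)).toHomUnits

lemma zmultiples_le_ker_singleUnitsQuotient :
    AddSubgroup.zmultiples a ≤ (singleUnitsQuotient k a).ker := by
  rw [AddSubgroup.zmultiples_le, AddMonoidHom.mem_ker]
  ext
  change Ideal.Quotient.mk _ (single a 1) = Ideal.Quotient.mk _ 1
  exact Ideal.Quotient.eq.2 (Ideal.subset_span rfl)

noncomputable def quotientZMultiplesLift :
    k[G ⧸ AddSubgroup.zmultiples a] →ₐ[k] k[G] ⧸ Ideal.span {(single a 1 : k[G]) - 1} :=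
  lift k _ _ ((Units.coeHom _).comp (AddMonoidHom.toMultiplicativeLeft
    (QuotientAddGroup.lift _ (singleUnitsQuotient k a)
      (zmultiples_le_ker_singleUnitsQuotient k a))))

lemma quotientZMultiplesLift_comp_mapDomainAlgHom :
    (quotientZMultiplesLift k a).comp (mapDomainAlgHom k k (QuotientAddGroup.mk' _)) =
      Ideal.Quotient.mkₐ k _ := by
  ext g
  simp [quotientZMultiplesLift, singleUnitsQuotient]

theorem ker_mapDomainRingHom_mk'_zmultiples :
    RingHom.ker (mapDomainRingHom k (QuotientAddGroup.mk' (AddSubgroup.zmultiples a))) =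
      Ideal.span {(single a 1 : k[G]) - 1} := by
  refine le_antisymm (fun p hp => ?_) ?_
  · rw [← Ideal.Quotient.eq_zero_iff_mem, ← Ideal.Quotient.mkₐ_eq_mk k,
      ← quotientZMultiplesLift_comp_mapDomainAlgHom, AlgHom.comp_apply]
    exact (congrArg _ hp).trans (map_zero _)
  · have ha : QuotientAddGroup.mk' (AddSubgroup.zmultiples a) a = 0 :=
      (QuotientAddGroup.eq_zero_iff a).2 (AddSubgroup.mem_zmultiples a)
    rw [Ideal.span_le, Set.singleton_subset_iff, SetLike.mem_coe, RingHom.mem_ker, map_sub,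
      map_one, mapDomainRingHom_apply, mapDomain_single, ha, ← one_def, sub_self]

theorem isPrime_span_single_sub_one [IsDomain k] [AddGroup.FG G]
    [IsAddTorsionFree (G ⧸ AddSubgroup.zmultiples a)] :
    (Ideal.span {(single a 1 : k[G]) - 1}).IsPrime := by
  rw [← ker_mapDomainRingHom_mk'_zmultiples]
  exact RingHom.ker_isPrime _

end ZMultiplesQuotient

end AddMonoidAlgebra

theorem stmt_0_general {k : Type*} [Field k] {n : ℕ} (a : Fin n → ℤ)
    (ha : Finset.univ.gcd a = 1) :
    (Ideal.span {(AddMonoidAlgebra.single (Finsupp.equivFunOnFinite.symm a) 1 :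
        AddMonoidAlgebra k (Fin n →₀ ℤ)) - 1}).IsPrime := by
  have : AddGroup.FG (Fin n →₀ ℤ) := Module.Finite.iff_addGroup_fg.mp inferInstance
  have : IsAddTorsionFree
      ((Fin n →₀ ℤ) ⧸ AddSubgroup.zmultiples (Finsupp.equivFunOnFinite.symm a)) :=
    QuotientAddGroup.isAddTorsionFree_of_nsmul_mem fun _ _ hm =>
      Finsupp.mem_zmultiples_of_nsmul_mem ha hm
  exact isPrime_span_single_sub_one k _

/-- For a field `k` and a primitive integer vector `a ∈ ℤⁿ`
(`gcd(a₁,…,aₙ) = 1`), the principal ideal generated by `Xᵃ − 1` in the Laurent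
polynomial ring `k[x₁^{±1},…,xₙ^{±1}]` (the group algebra of `ℤⁿ` over `k`)
is prime. -/
theorem stmt_0 {k : Type*} [Field k] {n : ℕ} (hn : 1 ≤ n) (a : Fin n → ℤ)
    (ha : Finset.univ.gcd a = 1) :
    (Ideal.span {(AddMonoidAlgebra.single (Finsupp.equivFunOnFinite.symm a) 1 :
        AddMonoidAlgebra k (Fin n →₀ ℤ)) - 1}).IsPrime :=
  stmt_0_general a ha
end

section
/- Let k be an algebraically closed field, n ≥ 2, and let f ∈ k[x_1, …, x_n] be an irreducible polynomial such that for every t ∈ k and every point (c_1, …, c_n) ∈ k^n with f(c_1, …, c_n) = 0, one also has f(c_1 + t, …, c_n + t) = 0 (the zero set of f is stable under simultaneous translation of all coordinates). Then there exists a polynomial g ∈ k[y_1, …, y_{n−1}] such that f(x_1, …, x_n) = g(x_1 − x_2, x_2 − x_3, …, x_{n−1} − x_n). -/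
/-!
In the coordinates `y₀ = x₀`, `yᵢ = x_{i-1} - xᵢ` a simultaneous translation of the `xᵢ` moves
only `y₀`. Hence, for fixed `y₁, …, yₙ`, `f` is a polynomial in `y₀` whose zero set is stable
under all translations. Over an algebraically closed field such a polynomial is constant: a root
would spread to every point. So `f` does not involve `y₀`.
-/

open MvPolynomial

theorem Polynomial.natDegree_eq_zero_of_isRoot_add {k : Type*} [Field k] [IsAlgClosed k]
    (p : Polynomial k) (hp : ∀ z t, p.IsRoot z → p.IsRoot (z + t)) : p.natDegree = 0 := by
  by_contra hdeg
  obtain ⟨z, hz⟩ := IsAlgClosed.exists_root p fun h =>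
    hdeg (natDegree_eq_zero_iff_degree_le_zero.2 h.le)
  have hzero : p = 0 := zero_of_eval_zero p fun w => by simpa using hp z (w - z) hz
  exact hdeg (by rw [hzero, natDegree_zero])

namespace MvPolynomial

variable {n : ℕ}

theorem finSuccEquiv_rename_succ {R : Type*} [CommSemiring R] (a : MvPolynomial (Fin n) R) :
    finSuccEquiv R n (rename Fin.succ a) = Polynomial.C a := by
  induction a using MvPolynomial.induction_on <;> simp_all [finSuccEquiv_apply]

theorem exists_eq_rename_succ_of_isRoot_cons_add {k : Type*} [Field k] [IsAlgClosed k]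
    (F : MvPolynomial (Fin (n + 1)) k)
    (hF : ∀ z t (y : Fin n → k), eval (Fin.cons z y) F = 0 → eval (Fin.cons (z + t) y) F = 0) :
    ∃ a : MvPolynomial (Fin n) k, F = rename Fin.succ a := by
  set q := finSuccEquiv k n F with hq
  have hconst (y : Fin n → k) : (q.map (eval y)).natDegree = 0 :=
    Polynomial.natDegree_eq_zero_of_isRoot_add _ fun z t hz => by
      rw [Polynomial.IsRoot.def, hq, ← eval_eq_eval_mv_eval'] at hz ⊢
      exact hF z t y hz
  have hcoeff (i : ℕ) (hi : i ≠ 0) : q.coeff i = 0 := MvPolynomial.funext fun y => by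
    rw [map_zero, ← Polynomial.coeff_map]
    exact Polynomial.coeff_eq_zero_of_natDegree_lt (by rw [hconst y]; omega)
  refine ⟨q.coeff 0, (finSuccEquiv k n).injective ?_⟩
  rw [finSuccEquiv_rename_succ]
  ext1 i
  rcases eq_or_ne i 0 with rfl | hi
  · simp [q]
  · simp [q, hcoeff i hi, Polynomial.coeff_C, hi]

end MvPolynomial

section SuccDiffs

variable {R : Type*} [CommRing R] {n : ℕ}

def toSuccDiffs (c : Fin (n + 1) → R) : Fin (n + 1) → R :=
  Fin.cons (c 0) fun j => c j.castSucc - c j.succ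

def ofSuccDiffs (d : Fin (n + 1) → R) : Fin (n + 1) → R :=
  Fin.induction (d 0) fun i s => s - d i.succ

@[simp]
theorem ofSuccDiffs_zero (d : Fin (n + 1) → R) : ofSuccDiffs d 0 = d 0 := rfl

@[simp]
theorem ofSuccDiffs_succ (d : Fin (n + 1) → R) (i : Fin n) :
    ofSuccDiffs d i.succ = ofSuccDiffs d i.castSucc - d i.succ :=
  Fin.induction_succ _ _ i

theorem ofSuccDiffs_toSuccDiffs (c : Fin (n + 1) → R) : ofSuccDiffs (toSuccDiffs c) = c := by
  funext i
  induction i using Fin.induction with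
  | zero => simp [toSuccDiffs]
  | succ i ih =>
    rw [ofSuccDiffs_succ, ih]
    simp [toSuccDiffs]

theorem map_ofSuccDiffs {S F : Type*} [CommRing S] [FunLike F R S] [RingHomClass F R S] (φ : F)
    (d : Fin (n + 1) → R) : (fun i => φ (ofSuccDiffs d i)) = ofSuccDiffs fun i => φ (d i) := by
  funext i
  induction i using Fin.induction with
  | zero => simp
  | succ i ih => simp [ih]

theorem ofSuccDiffs_cons_add (z t : R) (y : Fin n → R) :
    ofSuccDiffs (Fin.cons (z + t) y : Fin (n + 1) → R) =
      fun i => ofSuccDiffs (Fin.cons z y) i + t := by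
  funext i
  induction i using Fin.induction with
  | zero => simp
  | succ i ih =>
    simp only [ofSuccDiffs_succ, ih, Fin.cons_succ]
    ring

theorem MvPolynomial.aeval_toSuccDiffs_aeval_ofSuccDiffs (f : MvPolynomial (Fin (n + 1)) R) :
    aeval (toSuccDiffs X) (aeval (ofSuccDiffs (X : _ → MvPolynomial (Fin (n + 1)) R)) f) = f := by
  simp only [comp_aeval_apply, map_ofSuccDiffs, aeval_X, ofSuccDiffs_toSuccDiffs,
    aeval_X_left_apply]

theorem MvPolynomial.eval_aeval_ofSuccDiffs (d : Fin (n + 1) → R)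
    (f : MvPolynomial (Fin (n + 1)) R) :
    eval d (aeval (ofSuccDiffs (X : _ → MvPolynomial (Fin (n + 1)) R)) f) =
      eval (ofSuccDiffs d) f := by
  change aeval d (aeval _ f) = aeval _ f
  simp only [comp_aeval_apply, map_ofSuccDiffs, aeval_X]

end SuccDiffs

theorem stmt_3_general {k : Type*} [Field k] [IsAlgClosed k] {n : ℕ}
    (f : MvPolynomial (Fin (n + 1)) k)
    (hstab : ∀ (t : k) (c : Fin (n + 1) → k), MvPolynomial.eval c f = 0 →
      MvPolynomial.eval (fun i => c i + t) f = 0) :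
    ∃ g : MvPolynomial (Fin n) k,
      f = MvPolynomial.aeval
        (fun j : Fin n => MvPolynomial.X j.castSucc - MvPolynomial.X j.succ) g := by
  obtain ⟨g, hg⟩ := exists_eq_rename_succ_of_isRoot_cons_add
    (aeval (ofSuccDiffs X) f) fun z t y hzy => by
      rw [eval_aeval_ofSuccDiffs] at hzy ⊢
      rw [ofSuccDiffs_cons_add]
      exact hstab t _ hzy
  refine ⟨g, ?_⟩
  rw [← aeval_toSuccDiffs_aeval_ofSuccDiffs f, hg, aeval_rename]
  rfl

/-- Over an algebraically closed field, an irreducible polynomial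
in `n + 1 ≥ 2` variables whose zero set is stable under simultaneous translation
of all coordinates is a polynomial in the successive differences
`x₁ − x₂, …, xₙ − x_{n+1}`. -/
theorem stmt_3 {k : Type*} [Field k] [IsAlgClosed k] {n : ℕ} (hn : 1 ≤ n)
    (f : MvPolynomial (Fin (n + 1)) k) (hf : Irreducible f)
    (hstab : ∀ (t : k) (c : Fin (n + 1) → k), MvPolynomial.eval c f = 0 →
      MvPolynomial.eval (fun i => c i + t) f = 0) :
    ∃ g : MvPolynomial (Fin n) k,
      f = MvPolynomial.aeval
        (fun j : Fin n => MvPolynomial.X j.castSucc - MvPolynomial.X j.succ) g :=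
  stmt_3_general f hstab
end

section
/- Let Γ = {Γ_1, …, Γ_d} be a hypertree on {1, …, n}. Then |Γ_i ∩ Γ_j| ≤ 2 for all i ≠ j. Consequently, for any choice, for each i, of two distinguished elements a_{i1}, a_{i2} ∈ Γ_i, the 3-element sets {a_{i1}, a_{i2}, c}, taken over all 1 ≤ i ≤ d and all c ∈ Γ_i ∖ {a_{i1}, a_{i2}}, are pairwise distinct, and their total number is exactly n − 2. -/
/-!
Convexity applied to a pair `{Γ_i, Γ_j}` gives `|Γ_i ∪ Γ_j| ≥ |Γ_i| + |Γ_j| - 2`, i.e.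
`|Γ_i ∩ Γ_j| ≤ 2`. A triple `{a_{i1}, a_{i2}, c}` has three elements and lies in `Γ_i`, so it
lies in no other `Γ_j`; hence it determines `i`, and then `c`. For fixed `i` there are
`|Γ_i| - 2` triples, and normalization says that these numbers add up to `n - 2`.
-/

open Finset

section

variable {α ι : Type*} [DecidableEq α]

theorem card_inter_le_two_of_card_union {s t : Finset α} (hs : 2 ≤ #s) (ht : 2 ≤ #t)
    (hst : 2 + ((#s - 2) + (#t - 2)) ≤ #(s ∪ t)) : #(s ∩ t) ≤ 2 := by
  have := card_union_add_card_inter s t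
  omega

theorem card_inter_le_two_of_convex [DecidableEq ι] {Γ : ι → Finset α}
    (hconvex : ∀ S : Finset ι, S.Nonempty → 2 + ∑ j ∈ S, (#(Γ j) - 2) ≤ #(S.biUnion Γ))
    (htwo : ∀ j, 2 ≤ #(Γ j)) {i j : ι} (hij : i ≠ j) : #(Γ i ∩ Γ j) ≤ 2 := by
  have hpair := hconvex {i, j} (insert_nonempty i {j})
  rw [sum_pair hij, biUnion_insert, singleton_biUnion] at hpair
  exact card_inter_le_two_of_card_union (htwo i) (htwo j) hpair

theorem eq_of_subset_of_subset_of_card_eq_three {Γ : ι → Finset α}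
    (hinter : ∀ i j, i ≠ j → #(Γ i ∩ Γ j) ≤ 2) {u : Finset α} (hu : #u = 3) {i j : ι}
    (hi : u ⊆ Γ i) (hj : u ⊆ Γ j) : i = j := by
  by_contra hij
  have := card_le_card (subset_inter hi hj)
  have := hinter i j hij
  omega

theorem eq_of_insert_insert_singleton_eq {a b c c' : α} (hca : c ≠ a) (hcb : c ≠ b)
    (h : ({a, b, c} : Finset α) = {a, b, c'}) : c = c' := by
  have hc : c ∈ ({a, b, c'} : Finset α) := h ▸ by simp
  simpa [hca, hcb] using hc

theorem card_sdiff_pair {s : Finset α} {a b : α} (ha : a ∈ s) (hb : b ∈ s) (hab : a ≠ b) :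
    #(s \ {a, b}) = #s - 2 := by
  rw [card_sdiff_of_subset (insert_subset ha (singleton_subset_iff.mpr hb)), card_pair hab]

theorem card_filter_snd_mem [Fintype ι] [Fintype α] (f : ι → Finset α) :
    #{p : ι × α | p.2 ∈ f p.1} = ∑ i, #(f i) := by
  rw [card_filter, Fintype.sum_prod_type]
  simp

end

theorem stmt_5_general {n d : ℕ} (Γ : Fin d → Finset (Fin n))
    (hconvex : ∀ S : Finset (Fin d), S.Nonempty →
      2 + ∑ j ∈ S, ((Γ j).card - 2) ≤ (S.biUnion Γ).card)
    (hnorm : n = 2 + ∑ j, ((Γ j).card - 2))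
    (a1 a2 : Fin d → Fin n) (ha1 : ∀ i, a1 i ∈ Γ i) (ha2 : ∀ i, a2 i ∈ Γ i)
    (hne : ∀ i, a1 i ≠ a2 i) :
    (∀ i j : Fin d, i ≠ j → (Γ i ∩ Γ j).card ≤ 2) ∧
    Set.InjOn (fun p : Fin d × Fin n => ({a1 p.1, a2 p.1, p.2} : Finset (Fin n)))
      ((Finset.univ.filter
        (fun p : Fin d × Fin n => p.2 ∈ Γ p.1 ∧ p.2 ≠ a1 p.1 ∧ p.2 ≠ a2 p.1)) : Set (Fin d × Fin n)) ∧
    (Finset.univ.filter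
      (fun p : Fin d × Fin n => p.2 ∈ Γ p.1 ∧ p.2 ≠ a1 p.1 ∧ p.2 ≠ a2 p.1)).card = n - 2 := by
  have htwo : ∀ i, 2 ≤ #(Γ i) := fun i => one_lt_card.mpr ⟨_, ha1 i, _, ha2 i, hne i⟩
  have hinter : ∀ i j, i ≠ j → #(Γ i ∩ Γ j) ≤ 2 := fun _ _ =>
    card_inter_le_two_of_convex hconvex htwo
  have htriple : ∀ i c, c ∈ Γ i → ({a1 i, a2 i, c} : Finset (Fin n)) ⊆ Γ i := fun i c hc =>
    insert_subset (ha1 i) (insert_subset (ha2 i) (singleton_subset_iff.mpr hc))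
  refine ⟨hinter, ?_, ?_⟩
  · rintro ⟨i, c⟩ hc ⟨j, c'⟩ hc' (h : {a1 i, a2 i, c} = {a1 j, a2 j, c'})
    simp only [coe_filter, mem_univ, true_and, Set.mem_ofPred_eq] at hc hc'
    obtain ⟨hci, hca, hcb⟩ := hc
    have hthree : #{a1 i, a2 i, c} = 3 :=
      card_eq_three.mpr ⟨_, _, _, hne i, hca.symm, hcb.symm, rfl⟩
    obtain rfl : i = j := eq_of_subset_of_subset_of_card_eq_three hinter hthree
      (htriple i c hci) (h ▸ htriple j c' hc'.1)
    rw [eq_of_insert_insert_singleton_eq hca hcb h]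
  · have hfilter : ∀ p : Fin d × Fin n, (p.2 ∈ Γ p.1 ∧ p.2 ≠ a1 p.1 ∧ p.2 ≠ a2 p.1) ↔
        p.2 ∈ Γ p.1 \ {a1 p.1, a2 p.1} := by
      simp
    have hcount : ∀ i, #(Γ i \ {a1 i, a2 i}) = #(Γ i) - 2 := fun i =>
      card_sdiff_pair (ha1 i) (ha2 i) (hne i)
    rw [filter_congr fun p _ => hfilter p, card_filter_snd_mem fun i => Γ i \ {a1 i, a2 i},
      sum_congr rfl fun i _ => hcount i]
    omega

/-- For a hypertree `Γ = {Γ₁,…,Γ_d}` on `{1,…,n}` (distinct subsets,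
each of size ≥ 3, each vertex in at least two of them, satisfying convexity and
normalization), any two distinct `Γ_i, Γ_j` meet in at most 2 points; moreover, for
any choice of two distinguished elements `a1 i ≠ a2 i` in each `Γ_i`, the triples
`{a1 i, a2 i, c}` for `c ∈ Γ_i ∖ {a1 i, a2 i}` are pairwise distinct, and there
are exactly `n − 2` of them. -/
theorem stmt_5 {n d : ℕ} (Γ : Fin d → Finset (Fin n)) (hdist : Function.Injective Γ)
    (hcard : ∀ j, 3 ≤ (Γ j).card)
    (hcover : ∀ i : Fin n, 2 ≤ (Finset.univ.filter (fun j => i ∈ Γ j)).card)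
    (hconvex : ∀ S : Finset (Fin d), S.Nonempty →
      2 + ∑ j ∈ S, ((Γ j).card - 2) ≤ (S.biUnion Γ).card)
    (hnorm : n = 2 + ∑ j, ((Γ j).card - 2))
    (a1 a2 : Fin d → Fin n) (ha1 : ∀ i, a1 i ∈ Γ i) (ha2 : ∀ i, a2 i ∈ Γ i)
    (hne : ∀ i, a1 i ≠ a2 i) :
    (∀ i j : Fin d, i ≠ j → (Γ i ∩ Γ j).card ≤ 2) ∧
    Set.InjOn (fun p : Fin d × Fin n => ({a1 p.1, a2 p.1, p.2} : Finset (Fin n)))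
      ((Finset.univ.filter
        (fun p : Fin d × Fin n => p.2 ∈ Γ p.1 ∧ p.2 ≠ a1 p.1 ∧ p.2 ≠ a2 p.1)) : Set (Fin d × Fin n)) ∧
    (Finset.univ.filter
      (fun p : Fin d × Fin n => p.2 ∈ Γ p.1 ∧ p.2 ≠ a1 p.1 ∧ p.2 ≠ a2 p.1)).card = n - 2 :=
  stmt_5_general Γ hconvex hnorm a1 a2 ha1 ha2 hne
end

section
/- Let R be a commutative ring, p ∈ R, and M an m × m matrix over R. Suppose there exist a nonempty subset S of the row indices, a vector v ∈ R^m, and scalars c_i ∈ R for i ∈ S, such that M_{ij} − c_i · v_j lies in the principal ideal (p) for every i ∈ S and every column index j (i.e., modulo p every row indexed by S is a scalar multiple of the single vector v). Then p^{|S|−1} divides det M. -/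
/-!
Write a row `k ∈ S` as `c k • v + p • E` and expand the determinant linearly in that row.
In the `v`-term every other row of `S` becomes divisible by `p` after subtracting `c i • v`, which
leaves the determinant unchanged; in the `E`-term the factor `p` pays for removing `k` from `S`,
and induction on `S` handles the rest.
-/

namespace Matrix

variable {R : Type*} [CommRing R] {n : Type*} [Fintype n] [DecidableEq n]

theorem pow_card_dvd_det_of_forall_dvd (p : R) (T : Finset n) (B : Matrix n n R)
    (h : ∀ i ∈ T, ∀ j, p ∣ B i j) : p ^ T.card ∣ B.det := by
  choose! E hE using h
  have hB : B = diagonal (fun i => if i ∈ T then p else 1) *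
      of (fun i j => if i ∈ T then E i j else B i j) := by
    ext i j
    by_cases hi : i ∈ T <;> simp [diagonal_mul, hi, hE]
  rw [hB, det_mul, det_diagonal, Finset.prod_ite_mem, Finset.univ_inter, Finset.prod_const]
  exact dvd_mul_right _ _

theorem pow_card_dvd_det_of_forall_sub_smul_row_dvd (p : R) (A : Matrix n n R) (k : n)
    (T : Finset n) (hk : k ∉ T) (c : n → R) (h : ∀ i ∈ T, ∀ j, p ∣ A i j - c i * A k j) :
    p ^ T.card ∣ A.det := by
  let B : Matrix n n R := of fun i j => if i ∈ T then A i j - c i * A k j else A i j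
  have hdet : A.det = B.det := by
    refine det_eq_of_forall_row_eq_smul_add_const (fun i => if i ∈ T then c i else 0) k
      (by simp [hk]) fun i j => ?_
    by_cases hi : i ∈ T <;> simp [B, hi, hk]
  rw [hdet]
  exact pow_card_dvd_det_of_forall_dvd p T B fun i hi j => by simpa [B, hi] using h i hi j

theorem pow_card_sub_one_dvd_det_of_forall_sub_smul_dvd (p : R) (v c : n → R) (S : Finset n)
    (M : Matrix n n R) (h : ∀ i ∈ S, ∀ j, p ∣ M i j - c i * v j) :
    p ^ (S.card - 1) ∣ M.det := by
  induction S using Finset.induction_on generalizing M with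
  | empty => simp
  | @insert k T hk ih =>
    choose E hE using h k (Finset.mem_insert_self k T)
    have hrow : M k = c k • v + p • E := by
      funext j
      simp only [Pi.add_apply, Pi.smul_apply, smul_eq_mul]
      linear_combination hE j
    have hdet : M.det = c k * (M.updateRow k v).det + p * (M.updateRow k E).det := by
      conv_lhs => rw [← M.updateRow_eq_self k, hrow]
      rw [det_updateRow_add, det_updateRow_smul, det_updateRow_smul]
    have hv_term : p ^ T.card ∣ (M.updateRow k v).det := by
      refine pow_card_dvd_det_of_forall_sub_smul_row_dvd p _ k T hk c fun i hi j => ?_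
      rw [updateRow_ne (ne_of_mem_of_not_mem hi hk), updateRow_self]
      exact h i (Finset.mem_insert_of_mem hi) j
    have hE_term : p ^ T.card ∣ p * (M.updateRow k E).det := by
      refine (pow_dvd_pow p (by omega : T.card ≤ T.card - 1 + 1)).trans ?_
      rw [pow_succ']
      refine mul_dvd_mul_left p (ih _ fun i hi j => ?_)
      rw [updateRow_ne (ne_of_mem_of_not_mem hi hk)]
      exact h i (Finset.mem_insert_of_mem hi) j
    rw [Finset.card_insert_of_notMem hk, Nat.add_sub_cancel, hdet]
    exact dvd_add (hv_term.mul_left _) hE_term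

end Matrix

theorem stmt_6_general {R : Type*} [CommRing R] {m : ℕ} (p : R) (M : Matrix (Fin m) (Fin m) R)
    (S : Finset (Fin m)) (v : Fin m → R) (c : Fin m → R)
    (h : ∀ i ∈ S, ∀ j, M i j - c i * v j ∈ Ideal.span {p}) :
    p ^ (S.card - 1) ∣ M.det :=
  M.pow_card_sub_one_dvd_det_of_forall_sub_smul_dvd p v c S fun i hi j =>
    Ideal.mem_span_singleton.mp (h i hi j)

/-- If, modulo a principal ideal `(p)` of a commutative ring, every
row of a square matrix `M` indexed by a nonempty set `S` is a scalar multiple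
(`c i`) of one fixed vector `v`, then `p ^ (|S| − 1)` divides `det M`. -/
theorem stmt_6 {R : Type*} [CommRing R] {m : ℕ} (p : R) (M : Matrix (Fin m) (Fin m) R)
    (S : Finset (Fin m)) (hS : S.Nonempty) (v : Fin m → R) (c : Fin m → R)
    (h : ∀ i ∈ S, ∀ j, M i j - c i * v j ∈ Ideal.span {p}) :
    p ^ (S.card - 1) ∣ M.det :=
  stmt_6_general p M S v c h
end

section
/- With A and B as constructed in the context, for every i ∈ {1, …, d} the polynomial (x_{a_{i1}} − x_{a_{i2}})^{k_i − 3} divides det B in k[x_1, …, x_n]. -/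
/-!
Write `t = x_{a_{i1}} - x_{a_{i2}}`. Row `(i, j)` of `A` equals
`(x_{a_{i1}} - x_{a_{ij}}) (e_{a_{i1}} - e_{a_{i2}}) + t (e_{a_{ij}} - e_{a_{i1}})`,
so modulo `t` the `k_i - 2` rows of group `i` are all multiples of the single vector
`w = e_{a_{i1}} - e_{a_{i2}}`. Expanding the determinant multilinearly along these rows, every
term in which `w` is picked twice vanishes, so `t^{k_i - 3}` divides `det B`. If `i = i₀`, the
columns `a_{i1}, a_{i2}` are deleted, `w` restricts to `0`, and each of the `k_i - 3` surviving
rows of the group is divisible by `t` outright.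
-/

open MvPolynomial

/-- The `(n−2) × n` matrix `A` built from a hypertree: rows are indexed by pairs
`(i, j)` with `1 ≤ i ≤ d` and `3 ≤ j ≤ k_i` (here 0-indexed: `2 ≤ j`); the row
`(i, j)` has entry `x_{a_{i2}} − x_{a_{ij}}` in column `a_{i1}`, entry
`x_{a_{ij}} − x_{a_{i1}}` in column `a_{i2}`, entry `x_{a_{i1}} − x_{a_{i2}}` in
column `a_{ij}`, and `0` elsewhere. -/
noncomputable def Amat {K : Type*} [Field K] {n d : ℕ} (kk : Fin d → ℕ)
    (hk : ∀ i, 3 ≤ kk i) (a : (i : Fin d) → Fin (kk i) → Fin n) :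
    Matrix (Σ i : Fin d, {j : Fin (kk i) // 2 ≤ (j : ℕ)}) (Fin n) (MvPolynomial (Fin n) K) :=
  fun p c =>
    if c = a p.1 ⟨0, by have := hk p.1; omega⟩ then
      X (a p.1 ⟨1, by have := hk p.1; omega⟩) - X (a p.1 p.2.1)
    else if c = a p.1 ⟨1, by have := hk p.1; omega⟩ then
      X (a p.1 p.2.1) - X (a p.1 ⟨0, by have := hk p.1; omega⟩)
    else if c = a p.1 p.2.1 then
      X (a p.1 ⟨0, by have := hk p.1; omega⟩) - X (a p.1 ⟨1, by have := hk p.1; omega⟩)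
    else 0

open Finset

namespace Matrix

variable {R m : Type*} [CommRing R] [Fintype m] [DecidableEq m]

theorem pow_card_dvd_det_of_rows_eq_smul (M : Matrix m m R) (t : R) (S : Finset m)
    (hS : ∀ p ∈ S, ∃ u : m → R, M p = t • u) : t ^ #S ∣ M.det := by
  choose! u hu using hS
  let N : Matrix m m R := of fun p => if p ∈ S then u p else M p
  have hMN : M = of fun p j => (if p ∈ S then t else 1) * N p j := by
    ext p j
    by_cases hp : p ∈ S
    · simp [N, hp, hu p hp]
    · simp [N, hp]
  refine ⟨N.det, ?_⟩
  rw [hMN, det_mul_column, Fintype.prod_ite_mem, prod_const]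

theorem pow_card_dvd_det_of_rows_eq_smul_row_add (M : Matrix m m R) (t : R)
    (S : Finset m) {q : m} (hq : q ∉ S)
    (hS : ∀ p ∈ S, ∃ (c : R) (u : m → R), M p = c • M q + t • u) : t ^ #S ∣ M.det := by
  choose! c u hcu using hS
  let N : Matrix m m R := of fun p => if p ∈ S then t • u p else M p
  have hMN : M.det = N.det := by
    refine det_eq_of_forall_row_eq_smul_add_const (fun p => if p ∈ S then c p else 0) q
      (by simp [hq]) fun p j => ?_
    by_cases hp : p ∈ S
    · simp [N, hp, hq, hcu p hp, add_comm]
    · simp [N, hp]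
  rw [hMN]
  exact pow_card_dvd_det_of_rows_eq_smul N t S fun p hp => ⟨u p, if_pos hp⟩

theorem pow_card_sub_one_dvd_det_of_rows_eq_smul_add (w : m → R) (t : R)
    (S : Finset m) (M : Matrix m m R)
    (hS : ∀ p ∈ S, ∃ (c : R) (u : m → R), M p = c • w + t • u) : t ^ (#S - 1) ∣ M.det := by
  induction S using Finset.induction_on generalizing M with
  | empty => simp
  | insert p S hp ih =>
    obtain ⟨c, u, hpu⟩ := hS p (mem_insert_self p S)
    -- Split row `p` into its `w`- and `u`-parts; with `w` in row `p`, the other rows of `S`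
    -- reduce to multiples of `t` by subtracting multiples of row `p`.
    have hrows : ∀ v, ∀ q ∈ S, ∃ (c : R) (u : m → R), M.updateRow p v q = c • w + t • u :=
      fun v q hq => by
        rw [updateRow_ne (ne_of_mem_of_not_mem hq hp)]
        exact hS q (mem_insert_of_mem hq)
    have hw : t ^ #S ∣ (M.updateRow p w).det :=
      pow_card_dvd_det_of_rows_eq_smul_row_add _ t S hp (by simpa using hrows w)
    have hu : t ^ #S ∣ t * (M.updateRow p u).det := by
      refine (pow_dvd_pow t (by omega : #S ≤ #S - 1 + 1)).trans ?_
      rw [pow_succ']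
      exact mul_dvd_mul_left t (ih _ (hrows u))
    rw [← updateRow_eq_self M p, hpu, det_updateRow_add, det_updateRow_smul, det_updateRow_smul,
      card_insert_of_notMem hp, Nat.add_sub_cancel]
    exact dvd_add (hw.mul_left c) hu

end Matrix

theorem Fin.card_subtype_le_val (N k : ℕ) : Fintype.card {j : Fin N // k ≤ (j : ℕ)} = N - k := by
  simp_rw [← not_lt]
  rw [Fintype.card_subtype_compl, Fintype.card_subtype, Fin.card_filter_val_lt, Fintype.card_fin]
  omega

theorem Finset.card_subtype_ne_map_sigmaMk {ι : Type*} [DecidableEq ι] {κ : ι → Type*}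
    [∀ i, Fintype (κ i)] [∀ i, DecidableEq (κ i)] (r : Σ i, κ i) (i : ι) :
    #((univ.map (Function.Embedding.sigmaMk (β := κ) i)).subtype (· ≠ r)) =
      Fintype.card (κ i) - if r.1 = i then 1 else 0 := by
  have hr : r ∈ univ.map (Function.Embedding.sigmaMk i) ↔ r.1 = i := by
    refine ⟨fun hr => ?_, fun hr => ?_⟩
    · obtain ⟨x, -, rfl⟩ := mem_map.1 hr
      rfl
    · obtain ⟨i', x⟩ := r
      subst hr
      exact mem_map_of_mem _ (mem_univ x)
  rw [card_subtype, filter_ne']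
  by_cases h : r.1 = i
  · rw [card_erase_of_mem (hr.2 h), card_map, card_univ, if_pos h]
  · rw [erase_eq_of_notMem (mt hr.1 h), card_map, card_univ, if_neg h, Nat.sub_zero]

section Amat

variable {K : Type*} [Field K] {n d : ℕ} {kk : Fin d → ℕ} (hk : ∀ i, 3 ≤ kk i)
  (a : (i : Fin d) → Fin (kk i) → Fin n) {i : Fin d} (j : {j : Fin (kk i) // 2 ≤ (j : ℕ)})

theorem Amat_row_eq (hinj : Function.Injective (a i)) :
    Amat (K := K) kk hk a ⟨i, j⟩ =
      (X (a i ⟨0, by have := hk i; omega⟩) - X (a i j) : MvPolynomial (Fin n) K) •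
          (Pi.single (a i ⟨0, by have := hk i; omega⟩) 1 -
            Pi.single (a i ⟨1, by have := hk i; omega⟩) 1 : Fin n → MvPolynomial (Fin n) K) +
        (X (a i ⟨0, by have := hk i; omega⟩) - X (a i ⟨1, by have := hk i; omega⟩) :
            MvPolynomial (Fin n) K) •
          (Pi.single (a i j) 1 - Pi.single (a i ⟨0, by have := hk i; omega⟩) 1 :
            Fin n → MvPolynomial (Fin n) K) := by
  have := j.2
  ext c
  simp only [Amat, Pi.add_apply, Pi.smul_apply, Pi.sub_apply, Pi.single_apply, smul_eq_mul]
  split_ifs <;> simp_all [hinj.eq_iff, Fin.ext_iff]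

theorem Amat_apply_of_ne {c : Fin n} (hc0 : c ≠ a i ⟨0, by have := hk i; omega⟩)
    (hc1 : c ≠ a i ⟨1, by have := hk i; omega⟩) :
    Amat (K := K) kk hk a ⟨i, j⟩ c =
      (X (a i ⟨0, by have := hk i; omega⟩) - X (a i ⟨1, by have := hk i; omega⟩)) *
        (Pi.single (a i j) 1 : Fin n → MvPolynomial (Fin n) K) c := by
  simp only [Amat, hc0, hc1, if_false, Pi.single_apply]
  split_ifs <;> simp

end Amat

/-- with `A` as above (subsets `Γ_i = {a_{i1},…,a_{ik_i}}` of
`{1,…,n}`, `k_i ≥ 3`, `Σ (k_i − 2) = n − 2`, with the triples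
`{a_{i1}, a_{i2}, a_{ij}}` pairwise distinct), and `B` the `(n−3) × (n−3)` matrix
obtained from `A` by deleting one row `r0 = (i₀, j₀)` and the three columns
`a_{i₀1}, a_{i₀2}, a_{i₀j₀}` (any bijective ordering `e` of the remaining rows
against the remaining columns), for every `i` the polynomial
`(x_{a_{i1}} − x_{a_{i2}})^{k_i − 3}` divides `det B`. -/
theorem stmt_7 {K : Type*} [Field K] {n d : ℕ}
    (kk : Fin d → ℕ) (hk : ∀ i, 3 ≤ kk i)
    (a : (i : Fin d) → Fin (kk i) → Fin n) (hinj : ∀ i, Function.Injective (a i))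
    (r0 : Σ i : Fin d, {j : Fin (kk i) // 2 ≤ (j : ℕ)})
    (e : {p : Σ i : Fin d, {j : Fin (kk i) // 2 ≤ (j : ℕ)} // p ≠ r0} ≃
      {c : Fin n // c ≠ a r0.1 ⟨0, by have := hk r0.1; omega⟩ ∧
        c ≠ a r0.1 ⟨1, by have := hk r0.1; omega⟩ ∧ c ≠ a r0.1 r0.2.1})
    (i : Fin d) :
    (X (a i ⟨0, by have := hk i; omega⟩) - X (a i ⟨1, by have := hk i; omega⟩) :
        MvPolynomial (Fin n) K) ^ (kk i - 3) ∣
      Matrix.det ((Amat (K := K) kk hk a).submatrix (fun p => p.1) (fun p => (e p).1)) := by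
  classical
  set t : MvPolynomial (Fin n) K :=
    X (a i ⟨0, by have := hk i; omega⟩) - X (a i ⟨1, by have := hk i; omega⟩)
  set B := (Amat (K := K) kk hk a).submatrix (fun p : {p // p ≠ r0} => p.1) (fun p => (e p).1)
  let S := (univ.map (Function.Embedding.sigmaMk i)).subtype (· ≠ r0)
  have hS : ∀ p ∈ S, ∃ j, p.1 = ⟨i, j⟩ := fun p hp => by
    obtain ⟨j, -, hj⟩ := mem_map.1 (mem_subtype.1 hp)
    exact ⟨j, hj.symm⟩
  have hcard : #S = kk i - 2 - if r0.1 = i then 1 else 0 := by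
    rw [card_subtype_ne_map_sigmaMk, Fin.card_subtype_le_val]
  by_cases hi : r0.1 = i
  · subst hi
    have := Matrix.pow_card_dvd_det_of_rows_eq_smul B t S fun p hp => by
      obtain ⟨j, hj⟩ := hS p hp
      refine ⟨fun c => (Pi.single (a r0.1 j) 1 : Fin n → MvPolynomial (Fin n) K) (e c).1,
        funext fun c => ?_⟩
      change Amat kk hk a p.1 (e c).1 = t * _
      rw [hj]
      exact Amat_apply_of_ne hk a j (e c).2.1 (e c).2.2.1
    rwa [hcard, if_pos rfl, Nat.sub_sub] at this
  · have := Matrix.pow_card_sub_one_dvd_det_of_rows_eq_smul_add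
      (fun c => (Pi.single (a i ⟨0, by have := hk i; omega⟩) 1 -
        Pi.single (a i ⟨1, by have := hk i; omega⟩) 1 : Fin n → MvPolynomial (Fin n) K) (e c).1)
      t S B fun p hp => by
        obtain ⟨j, hj⟩ := hS p hp
        refine ⟨X (a i ⟨0, by have := hk i; omega⟩) - X (a i j),
          fun c => (Pi.single (a i j) 1 - Pi.single (a i ⟨0, by have := hk i; omega⟩) 1 :
            Fin n → MvPolynomial (Fin n) K) (e c).1, funext fun c => ?_⟩
        change Amat kk hk a p.1 (e c).1 = _
        rw [hj, Amat_row_eq hk a j (hinj i)]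
        rfl
    rwa [hcard, if_neg hi, Nat.sub_zero, Nat.sub_sub] at this
end

section
/- Let J ⊆ {1, …, n+2} with n+1 ∈ J, n+2 ∈ J and |J| ≥ 3, and set m = Σ_{i ∈ J, i ≤ n} |a_i|. Then F ∈ P_J^m and F ∉ P_J^{m+1}; that is, the multiplicity of F along the partial diagonal indexed by J is exactly Σ_{i ∈ J ∩ {1,…,n}} |a_i|. -/
/-!
The lower bound is factorwise: for `i ∈ J` both `p_{n+1} - pᵢ` and `p_{n+2} - pᵢ` lie in `P_J`,
so the `i`-th factor of either product in `F` lies in `P_J ^ |aᵢ|`. For the upper bound, pull `F`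
back along a polynomial curve through the diagonal on which `P_J` becomes `(t)`: there the factor
of the second product of `F` at some index `i₀ ≤ n` in `J` vanishes, while the first product is
`t ^ m` times a polynomial prime to `t`, hence not in `(t) ^ (m + 1)`.
-/

open MvPolynomial

/-- The Chen–Coskun polynomial
`F = ∏_{aᵢ>0}(p_{n+1}−pᵢ)^{aᵢ} ∏_{aᵢ<0}(p_{n+2}−pᵢ)^{−aᵢ}
   − ∏_{aᵢ<0}(p_{n+1}−pᵢ)^{−aᵢ} ∏_{aᵢ>0}(p_{n+2}−pᵢ)^{aᵢ}`
in `k[p₁,…,p_{n+2}]`. Variables are 0-indexed: `pᵢ = X (Fin.castAdd 2 i)` for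
`i : Fin n`, `p_{n+1} = X ⟨n, _⟩`, `p_{n+2} = X ⟨n+1, _⟩`; the exponent
`(a i).toNat` vanishes when `a i < 0` and `(-a i).toNat` vanishes when
`a i > 0`, so the products are exactly those of the paper. -/
noncomputable def Fpoly (k : Type*) [Field k] (n : ℕ) (a : Fin n → ℤ) :
    MvPolynomial (Fin (n + 2)) k :=
  (∏ i, (X (⟨n, by omega⟩ : Fin (n + 2)) - X (Fin.castAdd 2 i)) ^ (a i).toNat) *
      (∏ i, (X (⟨n + 1, by omega⟩ : Fin (n + 2)) - X (Fin.castAdd 2 i)) ^ (-a i).toNat) -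
    (∏ i, (X (⟨n, by omega⟩ : Fin (n + 2)) - X (Fin.castAdd 2 i)) ^ (-a i).toNat) *
      (∏ i, (X (⟨n + 1, by omega⟩ : Fin (n + 2)) - X (Fin.castAdd 2 i)) ^ (a i).toNat)

/-- The ideal `P_J` of `k[p₁,…,p_{n+2}]` generated by the linear forms
`pᵢ − pⱼ` for `i, j ∈ J`; the multiplicity of a polynomial along the partial
diagonal indexed by `J` is the largest `m` with the polynomial in `P_J ^ m`. -/
noncomputable def Pideal (k : Type*) [Field k] (n : ℕ) (J : Finset (Fin (n + 2))) :
    Ideal (MvPolynomial (Fin (n + 2)) k) :=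
  Ideal.span {f | ∃ i ∈ J, ∃ j ∈ J, f = X i - X j}

open scoped Polynomial

section ccFactor

variable {R : Type*} [CommRing R]

def ccFactor (x x' y : R) (b : ℤ) : R := (x - y) ^ b.toNat * (x' - y) ^ (-b).toNat

theorem map_ccFactor {S F : Type*} [CommRing S] [FunLike F R S] [RingHomClass F R S] (φ : F)
    (x x' y : R) (b : ℤ) :
    φ (ccFactor x x' y b) = ccFactor (φ x) (φ x') (φ y) b := by
  simp only [ccFactor, map_mul, map_pow, map_sub]

theorem ccFactor_mem_pow {I : Ideal R} {x x' y : R} (hx : x - y ∈ I) (hx' : x' - y ∈ I)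
    (b : ℤ) : ccFactor x x' y b ∈ I ^ b.natAbs := by
  rw [ccFactor, ← Int.toNat_add_toNat_neg_eq_natAbs, pow_add]
  exact Ideal.mul_mem_mul (Ideal.pow_mem_pow hx _) (Ideal.pow_mem_pow hx' _)

theorem ccFactor_eq_zero {x x' y : R} {b : ℤ} (hb : b ≠ 0) (hpos : 0 < b → y = x)
    (hneg : b < 0 → y = x') : ccFactor x x' y b = 0 := by
  rcases hb.lt_or_gt with hb | hb
  · rw [ccFactor, hneg hb, sub_self, zero_pow (by omega), mul_zero]
  · rw [ccFactor, hpos hb, sub_self, zero_pow (by omega), zero_mul]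

end ccFactor

theorem Ideal.notMem_pow_succ_of_map_eq_pow_mul {R S : Type*} [CommRing R] [CommRing S]
    [IsDomain S] {F : Type*} [FunLike F R S] [RingHomClass F R S] {I : Ideal R} {t : S}
    (ht : t ≠ 0) (φ : F) (hI : I.map φ ≤ Ideal.span {t}) {f : R} {m : ℕ} {g : S}
    (hf : φ f = t ^ m * g) (hg : ¬ t ∣ g) : f ∉ I ^ (m + 1) := by
  intro hmem
  have : φ f ∈ Ideal.span {t ^ (m + 1)} := by
    rw [← Ideal.span_singleton_pow]
    exact Ideal.pow_right_mono hI _ (Ideal.map_pow φ I _ ▸ Ideal.mem_map_of_mem φ hmem)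
  rw [Ideal.mem_span_singleton, hf, pow_succ, mul_dvd_mul_iff_left (pow_ne_zero _ ht)] at this
  exact hg this

theorem Fin.exists_castAdd_mem_of_lt_card {n m : ℕ} {J : Finset (Fin (n + m))}
    (hJ : m < J.card) : ∃ i : Fin n, Fin.castAdd m i ∈ J := by
  by_contra! h
  have hsub : J ⊆ Finset.univ.image (Fin.natAdd n) := by
    intro j hj
    induction j using Fin.addCases with
    | left i => exact absurd hj (h i)
    | right r => exact Finset.mem_image_of_mem _ (Finset.mem_univ r)
  have := (Finset.card_le_card hsub).trans Finset.card_image_le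
  simp only [Finset.card_univ, Fintype.card_fin] at this
  omega

section ChenCoskun

variable {k : Type*} [Field k] {n : ℕ} (a : Fin n → ℤ) (J : Finset (Fin (n + 2)))

theorem Fpoly_eq_sub_prod_ccFactor : Fpoly k n a =
    ∏ i, ccFactor (X ⟨n, by omega⟩) (X ⟨n + 1, by omega⟩) (X (Fin.castAdd 2 i)) (a i) -
      ∏ i, ccFactor (X ⟨n + 1, by omega⟩) (X ⟨n, by omega⟩) (X (Fin.castAdd 2 i)) (a i) := by
  simp only [Fpoly, ccFactor, Finset.prod_mul_distrib]
  ring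

theorem prod_ccFactor_mem_Pideal_pow {x x' : Fin (n + 2)} (hx : x ∈ J) (hx' : x' ∈ J) :
    ∏ i, ccFactor (X x) (X x') (X (Fin.castAdd 2 i)) (a i) ∈ Pideal k n J ^
      ∑ i ∈ Finset.univ.filter (fun i : Fin n => Fin.castAdd 2 i ∈ J), (a i).natAbs := by
  have gen : ∀ j ∈ J, ∀ i ∈ J, (X j - X i : MvPolynomial (Fin (n + 2)) k) ∈ Pideal k n J :=
    fun j hj i hi => Ideal.subset_span ⟨j, hj, i, hi, rfl⟩
  rw [Finset.sum_filter, ← Finset.prod_pow_eq_pow_sum]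
  refine Ideal.prod_mem_prod fun i _ => ?_
  split_ifs with hi
  · exact ccFactor_mem_pow (gen _ hx _ hi) (gen _ hx' _ hi) _
  · simp

theorem Fpoly_mem_Pideal_pow (hq1 : (⟨n, by omega⟩ : Fin (n + 2)) ∈ J)
    (hq2 : (⟨n + 1, by omega⟩ : Fin (n + 2)) ∈ J) :
    Fpoly k n a ∈ Pideal k n J ^
      ∑ i ∈ Finset.univ.filter (fun i : Fin n => Fin.castAdd 2 i ∈ J), (a i).natAbs := by
  rw [Fpoly_eq_sub_prod_ccFactor]
  exact sub_mem (prod_ccFactor_mem_Pideal_pow a J hq1 hq2)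
    (prod_ccFactor_mem_Pideal_pow a J hq2 hq1)

variable (k) in
/-- The curve `t ↦ p(t)` with `p_{n+1} = 0`, `p_{n+2} = t`, and for `i ≤ n`: `pᵢ = t` if
`i ∈ J` and `aᵢ > 0`, `pᵢ = 0` if `i ∈ J` and `aᵢ < 0`, `pᵢ = 1` if `i ∉ J`. -/
noncomputable def diagonalCurve : Fin (n + 2) → k[X] :=
  Fin.addCases
    (fun i => if Fin.castAdd 2 i ∈ J then (if 0 < a i then Polynomial.X else 0) else 1)
    ![0, Polynomial.X]

@[simp]
theorem diagonalCurve_castAdd (i : Fin n) : diagonalCurve k a J (Fin.castAdd 2 i) =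
    if Fin.castAdd 2 i ∈ J then (if 0 < a i then Polynomial.X else 0) else 1 :=
  Fin.addCases_left i

@[simp]
theorem diagonalCurve_n : diagonalCurve k a J ⟨n, by omega⟩ = 0 :=
  Fin.addCases_right (0 : Fin 2)

@[simp]
theorem diagonalCurve_n_add_one : diagonalCurve k a J ⟨n + 1, by omega⟩ = Polynomial.X :=
  Fin.addCases_right (1 : Fin 2)

theorem X_dvd_diagonalCurve {j : Fin (n + 2)} (hj : j ∈ J) :
    Polynomial.X ∣ diagonalCurve k a J j := by
  induction j using Fin.addCases with
  | left i => simp only [diagonalCurve_castAdd, hj, if_true]; split_ifs <;> simp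
  | right r => fin_cases r <;> simp [diagonalCurve]

theorem map_Pideal_le_span_X :
    (Pideal k n J).map (aeval (diagonalCurve k a J)) ≤ Ideal.span {Polynomial.X} := by
  rw [Pideal, Ideal.map_span, Ideal.span_le]
  rintro _ ⟨_, ⟨i, hi, j, hj, rfl⟩, rfl⟩
  simp only [map_sub, aeval_X, SetLike.mem_coe, Ideal.mem_span_singleton]
  exact dvd_sub (X_dvd_diagonalCurve a J hi) (X_dvd_diagonalCurve a J hj)

theorem ccFactor_diagonalCurve_eq_X_pow_mul (i : Fin n) :
    ∃ g : k[X], ccFactor 0 Polynomial.X (diagonalCurve k a J (Fin.castAdd 2 i)) (a i) =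
      Polynomial.X ^ (if Fin.castAdd 2 i ∈ J then (a i).natAbs else 0) * g ∧
      ¬ Polynomial.X ∣ g := by
  simp only [diagonalCurve_castAdd, ccFactor, Polynomial.X_dvd_iff,
    Polynomial.coeff_zero_eq_eval_zero]
  split_ifs with hi ha
  · refine ⟨(-1) ^ (a i).toNat, ?_, by simp⟩
    rw [zero_sub, sub_self, neg_pow', show (-a i).toNat = 0 by omega,
      show (a i).natAbs = (a i).toNat by omega]
    ring
  · refine ⟨1, ?_, by simp⟩
    rw [sub_self, sub_zero, show (a i).toNat = 0 by omega,
      show (a i).natAbs = (-a i).toNat by omega]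
    ring
  · exact ⟨_, (one_mul _).symm, by simp⟩

theorem prod_ccFactor_diagonalCurve_eq_X_pow_mul :
    ∃ g : k[X], ∏ i, ccFactor 0 Polynomial.X (diagonalCurve k a J (Fin.castAdd 2 i)) (a i) =
      Polynomial.X ^ (∑ i ∈ Finset.univ.filter (fun i : Fin n => Fin.castAdd 2 i ∈ J),
        (a i).natAbs) * g ∧
      ¬ Polynomial.X ∣ g := by
  choose g hg hX using ccFactor_diagonalCurve_eq_X_pow_mul (k := k) a J
  refine ⟨∏ i, g i, ?_, ?_⟩
  · rw [Finset.prod_congr rfl fun i _ => hg i, Finset.prod_mul_distrib,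
      Finset.prod_pow_eq_pow_sum, Finset.sum_filter]
  · rw [(Polynomial.prime_X (R := k)).dvd_finsetProd_iff]
    rintro ⟨i, -, hi⟩
    exact hX i hi

theorem prod_ccFactor_diagonalCurve_eq_zero (hnz : ∀ i, a i ≠ 0) {i : Fin n}
    (hi : Fin.castAdd 2 i ∈ J) :
    ∏ i, ccFactor Polynomial.X 0 (diagonalCurve k a J (Fin.castAdd 2 i)) (a i) = 0 := by
  refine Finset.prod_eq_zero (Finset.mem_univ i) (ccFactor_eq_zero (hnz i) ?_ ?_)
  · intro ha
    simp [hi, ha]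
  · intro ha
    simp [hi, ha.not_gt]

theorem Fpoly_notMem_Pideal_pow_succ (hnz : ∀ i, a i ≠ 0) (hJ : 3 ≤ J.card) :
    Fpoly k n a ∉ Pideal k n J ^
      ((∑ i ∈ Finset.univ.filter (fun i : Fin n => Fin.castAdd 2 i ∈ J), (a i).natAbs) + 1) := by
  obtain ⟨i₀, hi₀⟩ := Fin.exists_castAdd_mem_of_lt_card (m := 2) (J := J) hJ
  obtain ⟨g, hg, hX⟩ := prod_ccFactor_diagonalCurve_eq_X_pow_mul (k := k) a J
  refine Ideal.notMem_pow_succ_of_map_eq_pow_mul Polynomial.X_ne_zero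
    (aeval (diagonalCurve k a J)) (map_Pideal_le_span_X a J) ?_ hX
  rw [Fpoly_eq_sub_prod_ccFactor, map_sub, map_prod, map_prod]
  simp only [map_ccFactor, aeval_X, diagonalCurve_n, diagonalCurve_n_add_one]
  rw [hg, prod_ccFactor_diagonalCurve_eq_zero a J hnz hi₀, sub_zero]

end ChenCoskun

/-- for `J ⊆ {1,…,n+2}` containing both `n+1` and `n+2` with
`|J| ≥ 3`, the multiplicity of `F` along the partial diagonal indexed by `J`
is exactly `m = Σ_{i ∈ J ∩ {1,…,n}} |aᵢ|`: `F ∈ P_J ^ m` and `F ∉ P_J ^ (m+1)`. -/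
theorem stmt_10 {k : Type*} [Field k] {n : ℕ}
    (a : Fin n → ℤ)
    (hnz : ∀ i, a i ≠ 0)
    (J : Finset (Fin (n + 2)))
    (hq1 : (⟨n, by omega⟩ : Fin (n + 2)) ∈ J)
    (hq2 : (⟨n + 1, by omega⟩ : Fin (n + 2)) ∈ J)
    (hJ : 3 ≤ J.card) :
    Fpoly k n a ∈ (Pideal k n J) ^
        (∑ i ∈ Finset.univ.filter (fun i : Fin n => Fin.castAdd 2 i ∈ J), (a i).natAbs) ∧
    Fpoly k n a ∉ (Pideal k n J) ^
        ((∑ i ∈ Finset.univ.filter (fun i : Fin n => Fin.castAdd 2 i ∈ J), (a i).natAbs) + 1) :=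
  ⟨Fpoly_mem_Pideal_pow a J hq1 hq2, Fpoly_notMem_Pideal_pow_succ a J hnz hJ⟩
end

section
/- Let J ⊆ {1, …, n} with |J| ≥ 2 (so J contains neither n+1 nor n+2). If J ≠ {1, …, n}, then F ∉ P_J, i.e., the multiplicity of F along the partial diagonal indexed by J is 0. If J = {1, …, n}, then F ∈ P_J but F ∉ P_J^2, i.e., the multiplicity is exactly 1. -/
/-!
Write `F = G(a) - G(-a)` with `G(a) = ∏ (y - pᵢ)^{aᵢ⁺} (z - pᵢ)^{aᵢ⁻}` (`termProd`), where
`y = p_{n+1}`, `z = p_{n+2}`. A ring map that identifies the variables indexed by `J` kills `P_J`.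

* If `j ∉ J`, send `p_j ↦ 1`, the other `pᵢ ↦ 0`, `y ↦ 1`, `z ↦ -1`: exactly one of `G(a)`,
  `G(-a)` vanishes, according to the sign of `a_j`, so `F` does not vanish
  there.
* If `J = {1, …, n}`, identifying all `pᵢ` gives `G(a) = G(-a)`, since `∑ aᵢ⁺ = ∑ aᵢ⁻`.
* For `F ∉ P_J²`, map to the dual numbers `k[ε]` by `p_j ↦ ε`, the other `pᵢ ↦ 0`, `y ↦ 1`,
  `z ↦ -1`. Then `P_J ↦ (ε)`, so `P_J² ↦ 0`, while `F ↦ ±2 a_j ε ≠ 0`.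
-/

open MvPolynomial TrivSqZeroExt

section TermProd

variable {R ι : Type*} [CommRing R] [Fintype ι]

def termProd (y z : R) (p : ι → R) (a : ι → ℤ) : R :=
  ∏ i, (y - p i) ^ (a i).toNat * (z - p i) ^ (-a i).toNat

lemma sum_toNat_eq_sum_neg_toNat {a : ι → ℤ} (hsum : ∑ i, a i = 0) :
    ∑ i, (a i).toNat = ∑ i, (-a i).toNat := by
  have h : ((∑ i, (a i).toNat : ℕ) : ℤ) - ∑ i, (-a i).toNat = ∑ i, a i := by
    push_cast
    rw [← Finset.sum_sub_distrib]
    exact Finset.sum_congr rfl fun i _ => by omega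
  omega

lemma termProd_neg_of_forall_eq (y z : R) {p : ι → R} (hp : ∀ i j, p i = p j) {a : ι → ℤ}
    (hsum : ∑ i, a i = 0) : termProd y z p (-a) = termProd y z p a := by
  cases isEmpty_or_nonempty ι with
  | inl _ => simp [termProd]
  | inr h =>
  obtain ⟨i₀⟩ := h
  rw [show p = fun _ => p i₀ from funext fun i => hp i i₀]
  simp only [termProd, Pi.neg_apply, neg_neg, Finset.prod_mul_distrib,
    Finset.prod_pow_eq_pow_sum, sum_toNat_eq_sum_neg_toNat hsum]

lemma termProd_single_eq_zero_iff [IsDomain R] [DecidableEq ι] (h2 : (2 : R) ≠ 0)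
    (a : ι → ℤ) (j : ι) : termProd (1 : R) (-1) (Pi.single j 1) a = 0 ↔ 0 < a j := by
  have hy (i : ι) : (1 - if i = j then 1 else 0 : R) = 0 ↔ i = j := by
    split_ifs <;> simp [*]
  have hz (i : ι) : (-1 - if i = j then 1 else 0 : R) ≠ 0 := by
    split_ifs
    · simpa [← neg_add', one_add_one_eq_two] using h2
    · simp
  simp [termProd, Finset.prod_eq_zero_iff, Pi.single_apply, hy, hz]

end TermProd

section DualNumber

variable {R ι : Type*} [CommRing R]

lemma DualNumber.one_add_inr_mul_one_add_inr (c d : R) :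
    ((1 : DualNumber R) + inr c) * (1 + inr d) = 1 + inr (c + d) := by
  rw [mul_add, add_mul, add_mul, inr_mul_inr, inr_add]
  simp only [mul_one, one_mul, add_zero]
  abel

lemma DualNumber.prod_one_add_inr (s : Finset ι) (c : ι → R) :
    ∏ i ∈ s, ((1 : DualNumber R) + inr (c i)) = 1 + inr (∑ i ∈ s, c i) := by
  induction s using Finset.cons_induction with
  | empty => simp
  | cons i s hi ih =>
    rw [Finset.prod_cons, ih, DualNumber.one_add_inr_mul_one_add_inr, Finset.sum_cons]

lemma DualNumber.one_add_inr_pow (c : R) (m : ℕ) :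
    ((1 : DualNumber R) + inr c) ^ m = 1 + inr (m * c) := by
  simpa [nsmul_eq_mul] using DualNumber.prod_one_add_inr (Finset.range m) (fun _ => c)

lemma termProd_inr [Fintype ι] (c : ι → R) (a : ι → ℤ) :
    termProd (1 : DualNumber R) (-1) (fun i => inr (c i)) a =
      (-1) ^ (∑ i, (-a i).toNat) * (1 - inr (∑ i, (a i : R) * c i)) := by
  have hy (i : ι) : (1 : DualNumber R) - inr (c i) = 1 + inr (-c i) := by
    rw [inr_neg, sub_eq_add_neg]
  have hz (i : ι) : (-1 : DualNumber R) - inr (c i) = -1 * (1 + inr (c i)) := by ring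
  have hfactor (i : ι) :
      (1 + inr ((a i).toNat * -c i)) * ((-1) ^ (-a i).toNat * (1 + inr ((-a i).toNat * c i))) =
        (-1 : DualNumber R) ^ (-a i).toNat * (1 + inr (-(a i * c i))) := by
    have hcast : ((a i).toNat : R) - (-a i).toNat = a i := by
      exact_mod_cast congrArg (Int.cast : ℤ → R) (Int.toNat_sub_toNat_neg (a i))
    rw [mul_left_comm, DualNumber.one_add_inr_mul_one_add_inr, ← hcast]
    ring_nf
  simp only [termProd, hy, hz, mul_pow, DualNumber.one_add_inr_pow]
  rw [Finset.prod_congr rfl fun i _ => hfactor i, Finset.prod_mul_distrib,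
    Finset.prod_pow_eq_pow_sum, DualNumber.prod_one_add_inr, Finset.sum_neg_distrib, inr_neg,
    sub_eq_add_neg]

lemma sq_le_ker_of_le_comap_span_eps {S : Type*} [CommRing S] (ψ : S →+* DualNumber R)
    {I : Ideal S} (h : I ≤ (Ideal.span {DualNumber.eps}).comap ψ) : I ^ 2 ≤ RingHom.ker ψ := by
  calc I ^ 2 ≤ ((Ideal.span {DualNumber.eps}).comap ψ) ^ 2 := Ideal.pow_right_mono h 2
    _ ≤ ((Ideal.span {DualNumber.eps}) ^ 2).comap ψ := Ideal.le_comap_pow ψ 2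
    _ = RingHom.ker ψ := by
      rw [Ideal.span_singleton_pow, sq, DualNumber.eps_mul_eps, Ideal.span_singleton_eq_bot.2 rfl]
      rfl

end DualNumber

section Fpoly

variable {k : Type*} [Field k] {n : ℕ}

lemma map_Fpoly {S : Type*} [CommRing S] (φ : MvPolynomial (Fin (n + 2)) k →+* S)
    (a : Fin n → ℤ) :
    φ (Fpoly k n a) =
      termProd (φ (X ⟨n, by omega⟩)) (φ (X ⟨n + 1, by omega⟩))
          (fun i => φ (X (Fin.castAdd 2 i))) a -
        termProd (φ (X ⟨n, by omega⟩)) (φ (X ⟨n + 1, by omega⟩))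
          (fun i => φ (X (Fin.castAdd 2 i))) (-a) := by
  simp [Fpoly, termProd, Finset.prod_mul_distrib]

lemma aeval_append_Fpoly {S : Type*} [CommRing S] [Algebra k S] (p : Fin n → S) (y z : S)
    (a : Fin n → ℤ) :
    aeval (Fin.append p ![y, z]) (Fpoly k n a) = termProd y z p a - termProd y z p (-a) := by
  have hy : Fin.append p ![y, z] ⟨n, by omega⟩ = y := Fin.append_right p ![y, z] 0
  have hz : Fin.append p ![y, z] ⟨n + 1, by omega⟩ = z := Fin.append_right p ![y, z] 1
  simpa [hy, hz] using map_Fpoly (aeval (R := k) (Fin.append p ![y, z])).toRingHom a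

lemma Pideal_le_comap {S : Type*} [CommRing S] (φ : MvPolynomial (Fin (n + 2)) k →+* S)
    {J : Finset (Fin (n + 2))} (I : Ideal S) (h : ∀ i ∈ J, ∀ j ∈ J, φ (X i) - φ (X j) ∈ I) :
    Pideal k n J ≤ I.comap φ := by
  rw [Pideal, Ideal.span_le]
  rintro _ ⟨i, hi, j, hj, rfl⟩
  simpa using h i hi j hj

lemma exists_castAdd_notMem {J : Finset (Fin (n + 2))} (hJsub : ∀ i ∈ J, (i : ℕ) < n)
    (hne : J ≠ Finset.image (Fin.castAdd 2) Finset.univ) : ∃ j, Fin.castAdd 2 j ∉ J := by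
  by_contra! h
  refine hne (Finset.ext fun i => ⟨fun hi => ?_, fun hi => ?_⟩)
  · exact Finset.mem_image.2 ⟨⟨i, hJsub i hi⟩, Finset.mem_univ _, rfl⟩
  · obtain ⟨j, -, rfl⟩ := Finset.mem_image.1 hi
    exact h j

lemma Fpoly_notMem_Pideal (h2 : (2 : k) ≠ 0) {a : Fin n → ℤ} (hnz : ∀ i, a i ≠ 0)
    {J : Finset (Fin (n + 2))} (hJsub : ∀ i ∈ J, (i : ℕ) < n)
    (hne : J ≠ Finset.image (Fin.castAdd 2) Finset.univ) : Fpoly k n a ∉ Pideal k n J := by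
  obtain ⟨j, hj⟩ := exists_castAdd_notMem hJsub hne
  have hv : ∀ i ∈ J, Fin.append (Pi.single j 1 : Fin n → k) ![1, -1] i = (0 : k) := by
    intro i hi
    obtain ⟨i, rfl⟩ : ∃ i' : Fin n, Fin.castAdd 2 i' = i := ⟨⟨i, hJsub i hi⟩, rfl⟩
    have : i ≠ j := by rintro rfl; exact hj hi
    simp [this]
  have hker : Pideal k n J ≤ RingHom.ker
      (eval (Fin.append (Pi.single j 1 : Fin n → k) ![1, -1])) :=
    Pideal_le_comap _ ⊥ fun i hi i' hi' => by simp [hv i hi, hv i' hi']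
  intro hF
  have hzero : aeval (Fin.append (Pi.single j 1 : Fin n → k) ![1, -1]) (Fpoly k n a) = 0 :=
    hker hF
  rw [aeval_append_Fpoly, sub_eq_zero] at hzero
  have hiff := congrArg (· = 0) hzero
  simp only [termProd_single_eq_zero_iff h2, eq_iff_iff, Pi.neg_apply, Left.neg_pos_iff] at hiff
  exact hnz j (by omega)

lemma Fpoly_mem_Pideal_univ {a : Fin n → ℤ} (hsum : ∑ i, a i = 0) :
    Fpoly k n a ∈ Pideal k n (Finset.image (Fin.castAdd 2) Finset.univ) := by
  rw [← Ideal.Quotient.eq_zero_iff_mem, map_Fpoly, termProd_neg_of_forall_eq _ _ _ hsum, sub_self]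
  intro i j
  rw [Ideal.Quotient.mk_eq_mk_iff_sub_mem]
  exact Ideal.subset_span ⟨_, by simp, _, by simp, rfl⟩

lemma Fpoly_notMem_Pideal_univ_sq [CharZero k] {a : Fin n → ℤ} (hsum : ∑ i, a i = 0)
    {j : Fin n} (hj : a j ≠ 0) :
    Fpoly k n a ∉ Pideal k n (Finset.image (Fin.castAdd 2) Finset.univ) ^ 2 := by
  set w : Fin (n + 2) → DualNumber k :=
    Fin.append (fun i => inr ((Pi.single j 1 : Fin n → k) i)) ![1, -1]
  set ψ := ((aeval w).toRingHom : MvPolynomial (Fin (n + 2)) k →+* DualNumber k)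
  have hP : Pideal k n (Finset.image (Fin.castAdd 2) Finset.univ) ≤
      (Ideal.span {DualNumber.eps}).comap ψ := by
    refine Pideal_le_comap ψ _ fun i hi i' hi' => ?_
    obtain ⟨i, -, rfl⟩ := Finset.mem_image.1 hi
    obtain ⟨i', -, rfl⟩ := Finset.mem_image.1 hi'
    simp only [ψ, w, AlgHom.toRingHom_eq_coe, RingHom.coe_coe, aeval_X, Fin.append_left,
      DualNumber.inr_eq_smul_eps, Algebra.smul_def, ← sub_mul]
    exact Ideal.mul_mem_left _ _ (Ideal.mem_span_singleton_self DualNumber.eps)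
  intro hF
  have hzero := sq_le_ker_of_le_comap_span_eps ψ hP hF
  rw [RingHom.mem_ker] at hzero
  simp only [ψ, w, AlgHom.toRingHom_eq_coe, RingHom.coe_coe, aeval_append_Fpoly, termProd_inr,
    Pi.neg_apply, neg_neg, ← sum_toNat_eq_sum_neg_toNat hsum, ← mul_sub] at hzero
  rw [(isUnit_neg_one.pow _).mul_right_eq_zero] at hzero
  have hsnd : -(a j : k) - a j = 0 := by simpa [Pi.single_apply] using congrArg snd hzero
  have h2a : (2 * a j : k) = 0 := by linear_combination -hsnd
  simp [hj] at h2a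

end Fpoly

theorem stmt_11_general {k : Type*} [Field k] [CharZero k] {n : ℕ} (hn : 3 ≤ n)
    (a : Fin n → ℤ) (hsum : ∑ i, a i = 0)
    (hnz : ∀ i, a i ≠ 0)
    (J : Finset (Fin (n + 2))) (hJsub : ∀ i ∈ J, (i : ℕ) < n) :
    (J ≠ Finset.image (Fin.castAdd 2) Finset.univ → Fpoly k n a ∉ Pideal k n J) ∧
    (J = Finset.image (Fin.castAdd 2) Finset.univ →
      Fpoly k n a ∈ Pideal k n J ∧ Fpoly k n a ∉ (Pideal k n J) ^ 2) := by
  refine ⟨Fpoly_notMem_Pideal two_ne_zero hnz hJsub, ?_⟩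
  rintro rfl
  exact ⟨Fpoly_mem_Pideal_univ hsum,
    Fpoly_notMem_Pideal_univ_sq hsum (hnz ⟨0, by omega⟩)⟩

/-- for `J ⊆ {1,…,n}` (containing neither `n+1` nor `n+2`) with
`|J| ≥ 2`: if `J ≠ {1,…,n}` then `F ∉ P_J` (multiplicity 0), and if
`J = {1,…,n}` then `F ∈ P_J` but `F ∉ P_J²` (multiplicity exactly 1). -/
theorem stmt_11 {k : Type*} [Field k] [CharZero k] {n : ℕ} (hn : 3 ≤ n)
    (a : Fin n → ℤ) (hsum : ∑ i, a i = 0) (hgcd : Finset.univ.gcd a = 1)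
    (hnz : ∀ i, a i ≠ 0)
    (J : Finset (Fin (n + 2))) (hJsub : ∀ i ∈ J, (i : ℕ) < n) (hJ : 2 ≤ J.card) :
    (J ≠ Finset.image (Fin.castAdd 2) Finset.univ → Fpoly k n a ∉ Pideal k n J) ∧
    (J = Finset.image (Fin.castAdd 2) Finset.univ →
      Fpoly k n a ∈ Pideal k n J ∧ Fpoly k n a ∉ (Pideal k n J) ^ 2) :=
  stmt_11_general hn a hsum hnz J hJsub
end

section
/- Let J ⊆ {1, …, n+2} with |J| ≥ 2 and |J ∩ {n+1, n+2}| = 1, and set m = min( Σ_{i ∈ J, i ≤ n, a_i > 0} a_i , Σ_{i ∈ J, i ≤ n, a_i < 0} (−a_i) ). Then F ∈ P_J^m and F ∉ P_J^{m+1}; that is, the multiplicity of F along the partial diagonal indexed by J equals m. -/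
/-!
Write `F = A_q^b A_{q'}^c - A_q^c A_{q'}^b` with `A_q^e = ∏ (p_q - p_i)^{e_i}`, where `q` is the
one of `n+1, n+2` lying in `J`. Since `p_q - p_i ∈ P_J` for `i ∈ J`, `A_q^e ∈ P_J^{Σ_{i ∈ J} e_i}`,
so `F ∈ P_J^m`. For the converse let, say, `m = Σ_{i ∈ J} c_i` and pick `i₀ ∈ J` with `b_{i₀} > 0`.
Restrict to the line `t ↦ (t w_j)_{j ∈ J} × (w_j)_{j ∉ J}`, where `w_q = w_{i₀} = 0` and the other
`w_j` are distinct and nonzero. It sends `P_J` into `(t)`; the first term of `F` vanishes on it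
(it contains `p_q - p_{i₀}`), while the second becomes a nonzero constant times `t^m` times a
polynomial not vanishing at `t = 0`. Hence `F ∉ P_J^{m+1}`.
-/

open MvPolynomial

theorem Ideal.prod_pow_mem_pow_sum {R ι : Type*} [CommSemiring R] {I : Ideal R} {s : Finset ι}
    {f : ι → R} (e : ι → ℕ) (h : ∀ i ∈ s, f i ∈ I) :
    ∏ i ∈ s, f i ^ e i ∈ I ^ ∑ i ∈ s, e i :=
  Finset.prod_pow_eq_pow_sum s e I ▸ Ideal.prod_mem_prod fun i hi => Ideal.pow_mem_pow (h i hi) _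

theorem Ideal.notMem_pow_succ_of_map_eq_X_pow_mul {R S : Type*} [CommRing R] [CommRing S]
    [IsDomain S] (φ : R →+* Polynomial S) {I : Ideal R} (hI : I.map φ ≤ Ideal.span {Polynomial.X})
    {f : R} {m : ℕ} {W : Polynomial S} (hf : φ f = Polynomial.X ^ m * W) (hW : W.eval 0 ≠ 0) :
    f ∉ I ^ (m + 1) := by
  intro hmem
  have h := Ideal.pow_right_mono hI (m + 1) (Ideal.map_pow φ I (m + 1) ▸ Ideal.mem_map_of_mem φ hmem)
  rw [Ideal.span_singleton_pow, Ideal.mem_span_singleton, hf, pow_succ,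
    mul_dvd_mul_iff_left (pow_ne_zero _ Polynomial.X_ne_zero), Polynomial.X_dvd_iff,
    Polynomial.coeff_zero_eq_eval_zero] at h
  exact hW h

theorem Finset.mem_and_notMem_of_card_inter_pair_eq_one {α : Type*} [DecidableEq α]
    {s : Finset α} {x y : α} (hxy : x ≠ y) (h : (s ∩ {x, y}).card = 1) :
    x ∈ s ∧ y ∉ s ∨ y ∈ s ∧ x ∉ s := by
  by_cases hx : x ∈ s <;> by_cases hy : y ∈ s <;>
    simp_all [Finset.inter_insert_of_mem, Finset.inter_insert_of_notMem]

section CrossPoly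

variable {k : Type*} [Field k] {n : ℕ}

variable (k) in
noncomputable def linProd (q : Fin (n + 2)) (e : Fin n → ℕ) : MvPolynomial (Fin (n + 2)) k :=
  ∏ i, (X q - X (Fin.castAdd 2 i)) ^ e i

variable (k) in
noncomputable def crossPoly (q q' : Fin (n + 2)) (b c : Fin n → ℕ) :
    MvPolynomial (Fin (n + 2)) k :=
  linProd k q b * linProd k q' c - linProd k q c * linProd k q' b

def weightIn (J : Finset (Fin (n + 2))) (e : Fin n → ℕ) : ℕ :=
  ∑ i ∈ Finset.univ.filter (fun i : Fin n => Fin.castAdd 2 i ∈ J), e i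

theorem weightIn_add (J : Finset (Fin (n + 2))) (b c : Fin n → ℕ) :
    weightIn J (b + c) = weightIn J b + weightIn J c :=
  Finset.sum_add_distrib

theorem weightIn_ne_zero {J : Finset (Fin (n + 2))} {e : Fin n → ℕ} {i : Fin n}
    (hi : Fin.castAdd 2 i ∈ J) (he : e i ≠ 0) : weightIn J e ≠ 0 :=
  fun h => he (Finset.sum_eq_zero_iff.mp h i (Finset.mem_filter.mpr ⟨Finset.mem_univ i, hi⟩))

theorem crossPoly_swap_points (q q' : Fin (n + 2)) (b c : Fin n → ℕ) :
    crossPoly k q' q b c = -crossPoly k q q' b c := by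
  simp only [crossPoly]; ring

theorem crossPoly_swap_exponents (q q' : Fin (n + 2)) (b c : Fin n → ℕ) :
    crossPoly k q q' c b = -crossPoly k q q' b c := by
  simp only [crossPoly]; ring

theorem linProd_mem_pow {J : Finset (Fin (n + 2))} {q : Fin (n + 2)} (hq : q ∈ J)
    (e : Fin n → ℕ) : linProd k q e ∈ Pideal k n J ^ weightIn J e := by
  classical
  rw [linProd, ← Finset.prod_filter_mul_prod_filter_not Finset.univ (Fin.castAdd 2 · ∈ J)]
  exact Ideal.mul_mem_right _ _ <| Ideal.prod_pow_mem_pow_sum e fun i hi =>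
    Ideal.subset_span ⟨q, hq, _, (Finset.mem_filter.mp hi).2, rfl⟩

theorem crossPoly_mem_pow_min {J : Finset (Fin (n + 2))} {q : Fin (n + 2)} (hq : q ∈ J)
    (q' : Fin (n + 2)) (b c : Fin n → ℕ) :
    crossPoly k q q' b c ∈ Pideal k n J ^ min (weightIn J b) (weightIn J c) :=
  sub_mem
    (Ideal.pow_le_pow_right (min_le_left _ _) (Ideal.mul_mem_right _ _ (linProd_mem_pow hq b)))
    (Ideal.pow_le_pow_right (min_le_right _ _) (Ideal.mul_mem_right _ _ (linProd_mem_pow hq c)))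

end CrossPoly

theorem Fin.exists_castAdd_mem_of_card_inter_lt {n : ℕ} {J : Finset (Fin (n + 2))}
    (h : (J ∩ {⟨n, by omega⟩, ⟨n + 1, by omega⟩}).card < J.card) :
    ∃ i : Fin n, Fin.castAdd 2 i ∈ J := by
  by_contra! hJ
  refine h.ne (congrArg Finset.card (Finset.inter_eq_left.mpr fun j hj => ?_))
  induction j using Fin.addCases with
  | left i => exact absurd hj (hJ i)
  | right i => fin_cases i <;> simp [Fin.ext_iff]

section LineRestrict

variable {k : Type*} [Field k] {n : ℕ} (J : Finset (Fin (n + 2))) (w : Fin (n + 2) → k)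

noncomputable def lineRestrict : MvPolynomial (Fin (n + 2)) k →ₐ[k] Polynomial k :=
  aeval fun j => if j ∈ J then Polynomial.C (w j) * Polynomial.X else Polynomial.C (w j)

theorem map_Pideal_lineRestrict_le :
    (Pideal k n J).map (lineRestrict J w : MvPolynomial (Fin (n + 2)) k →+* Polynomial k) ≤
      Ideal.span {Polynomial.X} := by
  rw [Pideal, Ideal.map_span, Ideal.span_le]
  rintro _ ⟨_, ⟨i, hi, j, hj, rfl⟩, rfl⟩
  refine Ideal.mem_span_singleton'.mpr ⟨Polynomial.C (w i - w j), ?_⟩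
  simp [lineRestrict, hi, hj]
  ring

theorem lineRestrict_linProd {q : Fin (n + 2)} (hq : q ∈ J) (hw : w q = 0) (e : Fin n → ℕ) :
    lineRestrict J w (linProd k q e) =
      Polynomial.C (∏ i, (-w (Fin.castAdd 2 i)) ^ e i) * Polynomial.X ^ weightIn J e := by
  have hfactor : ∀ i : Fin n, lineRestrict J w ((X q - X (Fin.castAdd 2 i)) ^ e i) =
      Polynomial.C ((-w (Fin.castAdd 2 i)) ^ e i) *
        Polynomial.X ^ (if Fin.castAdd 2 i ∈ J then e i else 0) := by
    intro i
    by_cases hi : Fin.castAdd 2 i ∈ J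
    · simp [lineRestrict, hq, hi, hw, ← neg_mul, mul_pow]
    · simp [lineRestrict, hq, hi, hw]
  rw [linProd, map_prod, Finset.prod_congr rfl fun i _ => hfactor i, Finset.prod_mul_distrib,
    ← map_prod, Finset.prod_pow_eq_pow_sum, weightIn, Finset.sum_filter]

theorem eval_zero_lineRestrict (p : MvPolynomial (Fin (n + 2)) k) :
    (lineRestrict J w p).eval 0 = MvPolynomial.eval (fun j => if j ∈ J then 0 else w j) p := by
  induction p using MvPolynomial.induction_on with
  | C a => simp [lineRestrict]
  | add p q hp hq => simp [hp, hq]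
  | mul_X p j hp =>
    simp only [lineRestrict] at hp
    by_cases hj : j ∈ J <;> simp [lineRestrict, hj, hp]

end LineRestrict

theorem crossPoly_notMem_pow_succ {k : Type*} [Field k] [CharZero k] {n : ℕ}
    {J : Finset (Fin (n + 2))} {q q' : Fin (n + 2)} (hqJ : q ∈ J) (hq'J : q' ∉ J)
    (hq : ∀ i : Fin n, Fin.castAdd 2 i ≠ q) (hq' : ∀ i : Fin n, Fin.castAdd 2 i ≠ q')
    {b c : Fin n → ℕ} (hbc : ∀ i, b i = 0 ∨ c i = 0) (hb : weightIn J b ≠ 0) :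
    crossPoly k q q' b c ∉ Pideal k n J ^ (weightIn J c + 1) := by
  obtain ⟨i₀, hi₀J, hi₀⟩ := Finset.exists_ne_zero_of_sum_ne_zero hb
  replace hi₀J : Fin.castAdd 2 i₀ ∈ J := (Finset.mem_filter.mp hi₀J).2
  -- `q` and `i₀` go to the origin, every other point to its own nonzero position
  set w : Fin (n + 2) → k := fun j => if j = q ∨ j = Fin.castAdd 2 i₀ then 0 else (j : ℕ) + 1
  have hw : ∀ j, j ≠ q → j ≠ Fin.castAdd 2 i₀ → w j = (j : ℕ) + 1 := fun j h h₀ => by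
    simp [w, h, h₀]
  have hwq : w q = 0 := by simp [w]
  have hb_vanish : ∏ i, (-w (Fin.castAdd 2 i)) ^ b i = 0 :=
    Finset.prod_eq_zero (Finset.mem_univ i₀) (by simp [w, hi₀])
  have hc_coeff : ∏ i, (-w (Fin.castAdd 2 i)) ^ c i ≠ 0 := by
    refine Finset.prod_ne_zero_iff.mpr fun i _ => ?_
    rcases Nat.eq_zero_or_pos (c i) with hci | hci
    · simp [hci]
    have hii₀ : i ≠ i₀ := by rintro rfl; have := hbc i; omega
    rw [hw _ (hq i) (fun h => hii₀ (Fin.castAdd_injective _ _ h))]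
    exact pow_ne_zero _ (neg_ne_zero.mpr (Nat.cast_add_one_ne_zero _))
  have hq'_const : (lineRestrict J w (linProd k q' b)).eval 0 ≠ 0 := by
    rw [eval_zero_lineRestrict, linProd, map_prod]
    simp only [map_pow, map_sub]
    refine Finset.prod_ne_zero_iff.mpr fun i _ => pow_ne_zero _ (sub_ne_zero.mpr ?_)
    have hq'q : q' ≠ q := fun h => hq'J (h ▸ hqJ)
    simp only [eval_X, hq'J, if_false, hw q' hq'q (hq' i₀).symm]
    split_ifs with hi
    · exact Nat.cast_add_one_ne_zero _
    · rw [hw _ (fun h => hi (by rwa [h])) (fun h => hi (by rwa [h])), Ne, add_left_inj,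
        Nat.cast_inj, Fin.val_inj]
      exact (hq' i).symm
  refine Ideal.notMem_pow_succ_of_map_eq_X_pow_mul _ (map_Pideal_lineRestrict_le J w)
    (W := -(Polynomial.C (∏ i, (-w (Fin.castAdd 2 i)) ^ c i) * lineRestrict J w (linProd k q' b)))
    ?_ ?_
  · simp only [AlgHom.coe_toRingHom, crossPoly, map_sub, map_mul,
      lineRestrict_linProd J w hqJ hwq, hb_vanish, map_zero]
    ring
  · rw [Polynomial.eval_neg, Polynomial.eval_mul, Polynomial.eval_C, neg_ne_zero]
    exact mul_ne_zero hc_coeff hq'_const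

theorem crossPoly_mem_pow_min_and_notMem_pow_min_succ {k : Type*} [Field k] [CharZero k] {n : ℕ}
    {J : Finset (Fin (n + 2))} {q q' : Fin (n + 2)} (hqJ : q ∈ J) (hq'J : q' ∉ J)
    (hq : ∀ i : Fin n, Fin.castAdd 2 i ≠ q) (hq' : ∀ i : Fin n, Fin.castAdd 2 i ≠ q')
    {b c : Fin n → ℕ} (hbc : ∀ i, b i = 0 ∨ c i = 0) (hpos : weightIn J b + weightIn J c ≠ 0) :
    crossPoly k q q' b c ∈ Pideal k n J ^ min (weightIn J b) (weightIn J c) ∧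
      crossPoly k q q' b c ∉ Pideal k n J ^ (min (weightIn J b) (weightIn J c) + 1) := by
  refine ⟨crossPoly_mem_pow_min hqJ q' b c, ?_⟩
  rcases le_total (weightIn J c) (weightIn J b) with h | h
  · rw [min_eq_right h]
    exact crossPoly_notMem_pow_succ hqJ hq'J hq hq' hbc (by omega)
  · rw [min_eq_left h, ← neg_mem_iff, ← crossPoly_swap_exponents]
    exact crossPoly_notMem_pow_succ hqJ hq'J hq hq' (fun i => (hbc i).symm) (by omega)

/-- for `J ⊆ {1,…,n+2}` with `|J| ≥ 2` containing exactly one of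
`n+1, n+2`, the multiplicity of `F` along the partial diagonal indexed by `J`
is exactly `m = min(Σ_{i ∈ J, aᵢ>0} aᵢ, Σ_{i ∈ J, aᵢ<0} (−aᵢ))`:
`F ∈ P_J ^ m` and `F ∉ P_J ^ (m+1)`. -/
theorem stmt_12 {k : Type*} [Field k] [CharZero k] {n : ℕ}
    (a : Fin n → ℤ)
    (hnz : ∀ i, a i ≠ 0)
    (J : Finset (Fin (n + 2))) (hJ : 2 ≤ J.card)
    (hJq : (J ∩ ({⟨n, by omega⟩, ⟨n + 1, by omega⟩} : Finset (Fin (n + 2)))).card = 1) :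
    Fpoly k n a ∈ (Pideal k n J) ^
        (min (∑ i ∈ Finset.univ.filter (fun i : Fin n => Fin.castAdd 2 i ∈ J), (a i).toNat)
             (∑ i ∈ Finset.univ.filter (fun i : Fin n => Fin.castAdd 2 i ∈ J), (-a i).toNat)) ∧
    Fpoly k n a ∉ (Pideal k n J) ^
        (min (∑ i ∈ Finset.univ.filter (fun i : Fin n => Fin.castAdd 2 i ∈ J), (a i).toNat)
             (∑ i ∈ Finset.univ.filter (fun i : Fin n => Fin.castAdd 2 i ∈ J), (-a i).toNat) + 1) := by
  set b : Fin n → ℕ := fun i => (a i).toNat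
  set c : Fin n → ℕ := fun i => (-a i).toNat
  set q₁ : Fin (n + 2) := ⟨n, by omega⟩
  set q₂ : Fin (n + 2) := ⟨n + 1, by omega⟩
  have hq₁ : ∀ i : Fin n, Fin.castAdd 2 i ≠ q₁ := fun i => by simp [q₁, Fin.ext_iff]; omega
  have hq₂ : ∀ i : Fin n, Fin.castAdd 2 i ≠ q₂ := fun i => by simp [q₂, Fin.ext_iff]; omega
  have hbc : ∀ i, b i = 0 ∨ c i = 0 := fun i => by simp only [b, c]; omega
  obtain ⟨i, hi⟩ := Fin.exists_castAdd_mem_of_card_inter_lt (by rw [hJq]; omega)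
  have hpos : weightIn J b + weightIn J c ≠ 0 :=
    weightIn_add J b c ▸ weightIn_ne_zero hi (by simp only [Pi.add_apply, b, c]; grind)
  have hF : Fpoly k n a = crossPoly k q₁ q₂ b c := rfl
  rcases Finset.mem_and_notMem_of_card_inter_pair_eq_one (by simp [q₁, q₂]) hJq
    with ⟨h₁, h₂⟩ | ⟨h₂, h₁⟩
  · exact hF ▸ crossPoly_mem_pow_min_and_notMem_pow_min_succ h₁ h₂ hq₁ hq₂ hbc hpos
  · rw [hF, ← neg_neg (crossPoly k q₁ q₂ b c), ← crossPoly_swap_points, neg_mem_iff, neg_mem_iff]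
    exact crossPoly_mem_pow_min_and_notMem_pow_min_succ h₂ h₁ hq₂ hq₁ hbc hpos
end

section
/- Assume in addition that k is algebraically closed. Then F is divisible by p_{n+1} − p_{n+2}, and the quotient polynomial G = F / (p_{n+1} − p_{n+2}) ∈ k[p_1, …, p_{n+2}] is irreducible. -/
/-!
Choose `j` with `a_j` odd (possible as `gcd a = 1`); replacing `a` by `-a` only changes the sign
of `F`, so `a_j > 0`. As a polynomial in `T = p_j` over `B = k[p_i : i ≠ j]`,
`F = u (x - T)^m - v (y - T)^m` with `m = a_j`, `x = p_{n+1}`, `y = p_{n+2}`, where `u` and `v`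
are products of the prime linear forms `x - p_i`, `y - p_i` in which `x - p_i` has exponent
`max(a_i, 0)` in `u` and `max(-a_i, 0)` in `v`; in particular `u` and `v` are coprime.

Comparing the top two coefficients of `(x - y) G = F` shows that the content of `G` divides `u`
and `v`, so `G` is primitive, and by Gauss's lemma it suffices to prove irreducibility over
`Frac B`.
For every prime `ℓ ∣ m` some `a_i` is prime to `ℓ`, and the `(x - p_i)`-adic valuation of
`v / u` is `-a_i`, so `v / u` is not an `ℓ`-th power and `τ^m - v / u` is irreducible (`m` odd).
If `θ` is a root of `G`, then `τ = (θ - x) / (θ - y)` is a root of `τ^m - v / u` and generates the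
same field as `θ`; hence `θ` has degree `m = deg G` and `G` is irreducible.
-/

open MvPolynomial

section Multiplicity

variable {M : Type*} [CommMonoidWithZero M] [IsCancelMulZero M]

theorem multiplicity_pow_mul_of_not_dvd {π w : M} (hπ : π ≠ 0) (hw : ¬π ∣ w) (e : ℕ) :
    multiplicity π (π ^ e * w) = e :=
  multiplicity_eq_of_dvd_of_not_dvd (dvd_mul_right _ _) fun h => hw <| by
    rwa [pow_succ, mul_dvd_mul_iff_left (pow_ne_zero e hπ)] at h

theorem Prime.multiplicity_pow_mul [WfDvdMonoid M] {π s z : M} (hπ : Prime π)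
    (hs : s ≠ 0) (hz : z ≠ 0) (ℓ : ℕ) :
    multiplicity π (s ^ ℓ * z) = ℓ * multiplicity π s + multiplicity π z := by
  rw [multiplicity_mul hπ (.of_prime_left hπ (mul_ne_zero (pow_ne_zero _ hs) hz)),
    FiniteMultiplicity.multiplicity_pow hπ (.of_prime_left hπ hs)]

end Multiplicity

namespace IntermediateField

variable {K L : Type*} [Field K] [Field L] [Algebra K L]

theorem adjoin_simple_div_sub_eq {θ : L} {x y : K} (hxy : x ≠ y)
    (hθ : θ ≠ algebraMap K L y) :
    K⟮(θ - algebraMap K L x) / (θ - algebraMap K L y)⟯ = K⟮θ⟯ := by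
  set τ := (θ - algebraMap K L x) / (θ - algebraMap K L y)
  have hθy : θ - algebraMap K L y ≠ 0 := sub_ne_zero.mpr hθ
  have hτ : τ - 1 ≠ 0 := by
    rw [sub_ne_zero, Ne, div_eq_one_iff_eq hθy, sub_right_inj]
    exact fun h => hxy ((algebraMap K L).injective h)
  have hθτ : θ = (τ * algebraMap K L y - algebraMap K L x) / (τ - 1) := by
    rw [eq_div_iff hτ]
    linear_combination div_mul_cancel₀ (θ - algebraMap K L x) hθy
  refine le_antisymm (adjoin_simple_le_iff.mpr ?_) (adjoin_simple_le_iff.mpr ?_)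
  · have h := mem_adjoin_simple_self K θ
    exact div_mem (sub_mem h (algebraMap_mem _ x)) (sub_mem h (algebraMap_mem _ y))
  · have h := mem_adjoin_simple_self K τ
    rw [hθτ]
    exact div_mem (sub_mem (mul_mem h (algebraMap_mem _ y)) (algebraMap_mem _ x))
      (sub_mem h (one_mem _))

end IntermediateField

namespace Polynomial

section CommRing

variable {R : Type*} [CommRing R]

theorem coeff_X_sub_C_pow (w : R) (m k : ℕ) :
    ((X - C w) ^ m).coeff k = (-w) ^ (m - k) * m.choose k := by
  rw [sub_eq_add_neg, ← map_neg, coeff_X_add_C_pow]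

theorem natDegree_C_mul_X_sub_C_pow_sub_le (u v x y : R) (m : ℕ) :
    (C u * (X - C x) ^ m - C v * (X - C y) ^ m).natDegree ≤ m := by
  have h (w z : R) : (C w * (X - C z) ^ m).natDegree ≤ m :=
    (natDegree_C_mul_le _ _).trans
      ((natDegree_pow_le_of_le m (natDegree_X_sub_C_le _)).trans_eq (mul_one m))
  exact (natDegree_sub_le_of_le (h u x) (h v y)).trans_eq (max_self m)

theorem coeff_C_mul_X_sub_C_pow_sub (u v x y : R) (m : ℕ) :
    (C u * (X - C x) ^ m - C v * (X - C y) ^ m).coeff m = u - v := by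
  simp [coeff_X_sub_C_pow]

end CommRing

section Field

variable {K L : Type*} [Field K] [Field L] [Algebra K L]

open IntermediateField

theorem irreducible_of_aeval_eq_zero_of_natDegree_le {Q : K[X]} {θ : L}
    (hθ : IsIntegral K θ) (hQ : Q ≠ 0) (hroot : aeval θ Q = 0)
    (hdeg : Q.natDegree ≤ (minpoly K θ).natDegree) : Irreducible Q := by
  rw [eq_leadingCoeff_mul_of_monic_of_dvd_of_natDegree_le (minpoly.monic hθ)
      (minpoly.dvd K θ hroot) hdeg,
    irreducible_isUnit_mul (isUnit_C.mpr (leadingCoeff_ne_zero.mpr hQ).isUnit)]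
  exact minpoly.irreducible hθ

theorem irreducible_C_mul_X_sub_C_pow_sub {u v x y : K} {m : ℕ} (hm : m ≠ 0)
    (hxy : x ≠ y) (hu : u ≠ 0) (huv : u ≠ v) (hirr : Irreducible (X ^ m - C (v / u))) :
    Irreducible (C u * (X - C x) ^ m - C v * (X - C y) ^ m) := by
  have hcoeff := coeff_C_mul_X_sub_C_pow_sub u v x y m
  set Q := C u * (X - C x) ^ m - C v * (X - C y) ^ m
  have hQ : Q ≠ 0 := fun h => huv (sub_eq_zero.mp (by rw [← hcoeff, h, coeff_zero]))
  have hdeg : Q.natDegree = m := (natDegree_C_mul_X_sub_C_pow_sub_le u v x y m).antisymm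
    (le_natDegree_of_ne_zero (hcoeff ▸ sub_ne_zero.mpr huv))
  let L := AlgebraicClosure K
  obtain ⟨θ, hθ⟩ := IsAlgClosed.exists_aeval_eq_zero L Q
    (by rw [degree_eq_natDegree hQ, hdeg]; exact_mod_cast hm)
  have hθ' : algebraMap K L u * (θ - algebraMap K L x) ^ m =
      algebraMap K L v * (θ - algebraMap K L y) ^ m := by
    simpa [Q, sub_eq_zero] using hθ
  have hθy : θ ≠ algebraMap K L y := by
    rintro rfl
    rw [sub_self, zero_pow hm, mul_zero, mul_eq_zero, map_eq_zero, pow_eq_zero_iff hm,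
      sub_eq_zero] at hθ'
    exact hθ'.elim hu fun h => hxy ((algebraMap K L).injective h).symm
  set τ := (θ - algebraMap K L x) / (θ - algebraMap K L y)
  have hτ : aeval τ (X ^ m - C (v / u)) = 0 := by
    have hθy' : θ - algebraMap K L y ≠ 0 := sub_ne_zero.mpr hθy
    have hu' : algebraMap K L u ≠ 0 := (map_ne_zero_iff _ (algebraMap K L).injective).mpr hu
    simp only [map_sub, map_pow, aeval_X, aeval_C, map_div₀, τ, div_pow]
    rw [div_sub_div _ _ (pow_ne_zero m hθy') hu', div_eq_zero_iff]
    exact Or.inl (by linear_combination hθ')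
  have hminτ : minpoly K τ = X ^ m - C (v / u) :=
    (minpoly.eq_of_irreducible_of_monic hirr hτ (monic_X_pow_sub_C _ hm)).symm
  refine irreducible_of_aeval_eq_zero_of_natDegree_le (Algebra.IsIntegral.isIntegral θ) hQ hθ ?_
  rw [hdeg, ← adjoin.finrank (Algebra.IsIntegral.isIntegral θ), ← adjoin_simple_div_sub_eq hxy hθy,
    adjoin.finrank (Algebra.IsIntegral.isIntegral τ), hminτ, natDegree_X_pow_sub_C]

end Field

section Domain

variable {B : Type*} [CommRing B] [IsDomain B]

theorem isPrimitive_of_C_sub_mul_eq {u v x y : B} {m : ℕ} {G : B[X]} (hm : m ≠ 0)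
    (hmB : IsUnit (m : B)) (hxy : x - y ≠ 0) (huv : IsRelPrime u v)
    (hG : C (x - y) * G = C u * (X - C x) ^ m - C v * (X - C y) ^ m) : G.IsPrimitive := by
  intro r hr
  have hrG : C (r * (x - y)) ∣ C u * (X - C x) ^ m - C v * (X - C y) ^ m := by
    rw [← hG, map_mul, mul_comm (C r)]
    exact mul_dvd_mul_left _ hr
  have hcoeff k := (C_dvd_iff_dvd_coeff _ _).mp hrG k
  -- the coefficients of `X ^ m` and `X ^ (m - 1)` are `u - v` and `-m (u x - v y)`
  have h₁ : r * (x - y) ∣ u - v := by simpa [coeff_X_sub_C_pow] using hcoeff m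
  have h₂ : r * (x - y) ∣ u * x - v * y := by
    have hm₁ : 1 ≤ m := Nat.one_le_iff_ne_zero.mpr hm
    have h := hcoeff (m - 1)
    simp only [coeff_sub, coeff_C_mul, coeff_X_sub_C_pow, Nat.sub_sub_self hm₁, pow_one,
      Nat.choose_symm hm₁, Nat.choose_one_right] at h
    rw [show u * (-x * m) - v * (-y * m) = -(m : B) * (u * x - v * y) by ring] at h
    exact hmB.neg.dvd_mul_left.mp h
  refine huv ((mul_dvd_mul_iff_right hxy).mp ?_) ((mul_dvd_mul_iff_right hxy).mp ?_)
  · convert dvd_sub h₂ (h₁.mul_left y) using 1; ring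
  · convert dvd_sub h₂ (h₁.mul_left x) using 1; ring

theorem irreducible_of_C_sub_mul_eq [UniqueFactorizationMonoid B] {u v x y : B} {m : ℕ}
    {G : B[X]} (hm : Odd m) (hmB : IsUnit (m : B)) (hxy : x - y ≠ 0) (hu : u ≠ 0) (huv : u ≠ v)
    (hcop : IsRelPrime u v)
    (hpow : ∀ ℓ : ℕ, ℓ.Prime → ℓ ∣ m → ∀ s t : B, t ≠ 0 → s ^ ℓ * u ≠ t ^ ℓ * v)
    (hG : C (x - y) * G = C u * (X - C x) ^ m - C v * (X - C y) ^ m) : Irreducible G := by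
  let K := FractionRing B
  let f := algebraMap B K
  have hf : Function.Injective f := IsFractionRing.injective B K
  have hprim := isPrimitive_of_C_sub_mul_eq hm.pos.ne' hmB hxy hcop hG
  rw [hprim.irreducible_iff_irreducible_map_fraction_map (K := K),
    ← irreducible_isUnit_mul (isUnit_C.mpr ((map_ne_zero_iff f hf).mpr hxy).isUnit)]
  have hG' := congrArg (Polynomial.map f) hG
  simp only [Polynomial.map_mul, Polynomial.map_sub, Polynomial.map_pow, map_C, map_X] at hG'
  rw [hG']
  refine irreducible_C_mul_X_sub_C_pow_sub hm.pos.ne' (fun h => hxy (sub_eq_zero.mpr (hf h)))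
    ((map_ne_zero_iff f hf).mpr hu) (hf.ne huv)
    (X_pow_sub_C_irreducible_of_odd hm fun ℓ hℓ hℓm b hb => ?_)
  obtain ⟨s, t, ht, rfl⟩ := IsFractionRing.div_surjective (A := B) b
  have ht0 : t ≠ 0 := nonZeroDivisors.ne_zero ht
  refine hpow ℓ hℓ hℓm s t ht0 (hf ?_)
  rw [div_pow, div_eq_div_iff (pow_ne_zero _ ((map_ne_zero_iff f hf).mpr ht0))
    ((map_ne_zero_iff f hf).mpr hu)] at hb
  simp only [map_mul, map_pow]
  linear_combination hb

end Domain

end Polynomial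

section DiffProd

variable {R ι : Type*} [CommRing R] [Fintype ι]

/-- `Fpoly k n a` unfolds to `diffProd x y p a⁺ a⁻ - diffProd x y p a⁻ a⁺`. -/
def diffProd (x y : R) (p : ι → R) (α β : ι → ℕ) : R :=
  (∏ i, (x - p i) ^ α i) * ∏ i, (y - p i) ^ β i

theorem diffProd_comm (x y : R) (p : ι → R) (α β : ι → ℕ) :
    diffProd x y p α β = diffProd y x p β α :=
  mul_comm _ _

theorem map_diffProd {S F : Type*} [CommRing S] [FunLike F R S] [RingHomClass F R S] (f : F)
    (x y : R) (p : ι → R) (α β : ι → ℕ) :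
    f (diffProd x y p α β) = diffProd (f x) (f y) (fun i => f (p i)) α β := by
  simp [diffProd, map_prod]

theorem diffProd_eq_mul_update [DecidableEq ι] (x y : R) (p : ι → R) (α β : ι → ℕ) (i : ι) :
    diffProd x y p α β = (x - p i) ^ α i * diffProd x y p (Function.update α i 0) β := by
  simp only [diffProd, ← mul_assoc]
  congr 1
  rw [Fintype.prod_eq_mul_prod_compl i, Fintype.prod_eq_mul_prod_compl i]
  simp only [Function.update_self, pow_zero, one_mul]
  congr 1
  exact Finset.prod_congr rfl fun l hl => by
    rw [Function.update_of_ne (by simpa using hl)]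

theorem diffProd_eq_mul_subtype_ne [DecidableEq ι] (x y : R) (p : ι → R) (α β : ι → ℕ) (j : ι) :
    diffProd x y p α β = (x - p j) ^ α j * (y - p j) ^ β j *
      diffProd x y (fun i : {i // i ≠ j} => p i) (fun i => α i) (fun i => β i) := by
  rw [diffProd, diffProd, Fintype.prod_eq_mul_prod_subtype_ne _ j,
    Fintype.prod_eq_mul_prod_subtype_ne (fun i => (y - p i) ^ β i) j]
  ring

theorem sub_dvd_diffProd_sub_diffProd (x y : R) (p : ι → R) (α β : ι → ℕ) :
    x - y ∣ diffProd x y p α β - diffProd x y p β α := by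
  rw [← Ideal.mem_span_singleton, ← Ideal.Quotient.eq, map_diffProd, map_diffProd,
    Ideal.Quotient.eq.mpr (Ideal.mem_span_singleton_self (x - y))]
  exact diffProd_comm _ _ _ _ _

end DiffProd

namespace MvPolynomial

section Equiv

variable {σ R : Type*} [CommSemiring R] [DecidableEq σ]

noncomputable def polynomialEquivSubtypeNe (s : σ) :
    MvPolynomial σ R ≃ₐ[R] Polynomial (MvPolynomial {t // t ≠ s} R) :=
  (renameEquiv R (Equiv.optionSubtypeNe s).symm).trans (optionEquivLeft R _)

@[simp]
theorem polynomialEquivSubtypeNe_X_self (s : σ) :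
    polynomialEquivSubtypeNe (R := R) s (X s) = Polynomial.X := by
  simp [polynomialEquivSubtypeNe]

@[simp]
theorem polynomialEquivSubtypeNe_X_of_ne {s t : σ} (h : t ≠ s) :
    polynomialEquivSubtypeNe (R := R) s (X t) = Polynomial.C (X ⟨t, h⟩) := by
  simp [polynomialEquivSubtypeNe, Equiv.optionSubtypeNe_symm_of_ne h]

end Equiv

variable {S ι k : Type*} [Field k]

theorem prime_X_sub_X {s t : S} (h : s ≠ t) : Prime (X s - X t : MvPolynomial S k) := by
  classical
  have hp := Polynomial.prime_X_sub_C (X ⟨t, h.symm⟩ : MvPolynomial {b // b ≠ s} k)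
  rw [← polynomialEquivSubtypeNe_X_self, ← polynomialEquivSubtypeNe_X_of_ne h.symm,
    ← map_sub] at hp
  exact (MulEquiv.prime_iff (polynomialEquivSubtypeNe s).toMulEquiv).mp hp

theorem eq_or_eq_of_X_sub_X_dvd {s t s' t' : S} (h : s' ≠ t')
    (hd : (X s - X t : MvPolynomial S k) ∣ X s' - X t') :
    s' = s ∧ t' = t ∨ s' = t ∧ t' = s := by
  classical
  -- substituting `s` for `t` kills `X s - X t`, hence also `X s' - X t'`
  have := map_dvd (rename (R := k) (Function.update id t s)) hd
  simp only [map_sub, rename_X, Function.update_apply, id, ite_self] at this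
  split_ifs at this <;>
    simp only [sub_self, zero_dvd_iff, sub_eq_zero, X_injective.eq_iff] at this <;> grind

theorem eq_and_eq_of_associated_X_sub_X {q : ι → S} {z z' : S} (hq : Function.Injective q)
    (hz : ∀ l, q l ≠ z) (hz' : ∀ l, q l ≠ z') {i l : ι}
    (h : Associated (X z - X (q i) : MvPolynomial S k) (X z' - X (q l))) : z = z' ∧ i = l := by
  rcases eq_or_eq_of_X_sub_X_dvd (hz' l).symm h.dvd with ⟨h₁, h₂⟩ | ⟨-, h₂⟩
  · exact ⟨h₁.symm, hq h₂.symm⟩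
  · exact absurd h₂ (hz l)

section LinearForms

variable [Fintype ι] {x y : S} {q : ι → S}

theorem diffProd_X_ne_zero (hx : ∀ i, q i ≠ x) (hy : ∀ i, q i ≠ y) (α β : ι → ℕ) :
    diffProd (X x) (X y) (fun i => X (q i)) α β ≠ (0 : MvPolynomial S k) := by
  simp only [diffProd, mul_ne_zero_iff, Finset.prod_ne_zero_iff]
  exact ⟨fun i _ => pow_ne_zero _ (prime_X_sub_X (hx i).symm).ne_zero,
    fun i _ => pow_ne_zero _ (prime_X_sub_X (hy i).symm).ne_zero⟩

theorem exists_associated_of_prime_dvd_diffProd (hx : ∀ i, q i ≠ x) (hy : ∀ i, q i ≠ y)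
    {π : MvPolynomial S k} (hπ : Prime π) {α β : ι → ℕ}
    (h : π ∣ diffProd (X x) (X y) (fun i => X (q i)) α β) :
    ∃ i, α i ≠ 0 ∧ Associated π (X x - X (q i)) ∨ β i ≠ 0 ∧ Associated π (X y - X (q i)) := by
  have key {z : S} (hz : ∀ i, q i ≠ z) {γ : ι → ℕ} (h : π ∣ ∏ i, (X z - X (q i)) ^ γ i) :
      ∃ i, γ i ≠ 0 ∧ Associated π (X z - X (q i)) := by
    obtain ⟨i, -, hi⟩ := (hπ.dvd_finsetProd_iff _).mp h
    refine ⟨i, fun h0 => hπ.not_dvd_one (by rwa [h0, pow_zero] at hi), ?_⟩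
    exact hπ.associated_of_dvd (prime_X_sub_X (hz i).symm) (hπ.dvd_of_dvd_pow hi)
  rcases hπ.dvd_mul.mp h with h | h
  · obtain ⟨i, hi⟩ := key hx h; exact ⟨i, .inl hi⟩
  · obtain ⟨i, hi⟩ := key hy h; exact ⟨i, .inr hi⟩

theorem isRelPrime_diffProd (hq : Function.Injective q) (hxy : x ≠ y) (hx : ∀ i, q i ≠ x)
    (hy : ∀ i, q i ≠ y) {α β : ι → ℕ} (hαβ : ∀ i, α i = 0 ∨ β i = 0) :
    IsRelPrime (diffProd (X x) (X y) (fun i => X (q i)) α β : MvPolynomial S k)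
      (diffProd (X x) (X y) (fun i => X (q i)) β α) := by
  refine (UniqueFactorizationMonoid.isRelPrime_iff_no_prime_factors
    (diffProd_X_ne_zero hx hy α β)).mpr fun π hu hv hπ => ?_
  obtain ⟨i, hi⟩ := exists_associated_of_prime_dvd_diffProd hx hy hπ hu
  obtain ⟨l, hl⟩ := exists_associated_of_prime_dvd_diffProd hx hy hπ hv
  rcases hi with ⟨hi, hπi⟩ | ⟨hi, hπi⟩ <;> rcases hl with ⟨hl, hπl⟩ | ⟨hl, hπl⟩ <;>
    obtain ⟨hzz, rfl⟩ := eq_and_eq_of_associated_X_sub_X hq ‹_› ‹_› (hπi.symm.trans hπl)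
  all_goals first | exact hxy hzz | exact hxy hzz.symm | grind

theorem multiplicity_X_sub_X_diffProd [DecidableEq ι] (hq : Function.Injective q) (hxy : x ≠ y)
    (hx : ∀ i, q i ≠ x) (hy : ∀ i, q i ≠ y) (α β : ι → ℕ) (i : ι) :
    multiplicity (X x - X (q i) : MvPolynomial S k)
      (diffProd (X x) (X y) (fun i => X (q i)) α β) = α i := by
  have hπ := prime_X_sub_X (k := k) (hx i).symm
  rw [diffProd_eq_mul_update _ _ _ _ _ i, multiplicity_pow_mul_of_not_dvd hπ.ne_zero]
  intro h
  obtain ⟨l, ⟨hl, hπl⟩ | ⟨-, hπl⟩⟩ := exists_associated_of_prime_dvd_diffProd hx hy hπ h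
  · obtain ⟨-, rfl⟩ := eq_and_eq_of_associated_X_sub_X hq hx hx hπl
    exact hl (Function.update_self ..)
  · exact hxy (eq_and_eq_of_associated_X_sub_X hq hx hy hπl).1

theorem diffProd_ne_diffProd (hq : Function.Injective q) (hxy : x ≠ y)
    (hx : ∀ i, q i ≠ x) (hy : ∀ i, q i ≠ y) {α β : ι → ℕ} {i : ι} (hi : α i ≠ β i) :
    (diffProd (X x) (X y) (fun i => X (q i)) α β : MvPolynomial S k) ≠
      diffProd (X x) (X y) (fun i => X (q i)) β α := by
  classical
  intro h
  have := congrArg (multiplicity (X x - X (q i))) h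
  rw [multiplicity_X_sub_X_diffProd hq hxy hx hy, multiplicity_X_sub_X_diffProd hq hxy hx hy]
    at this
  exact hi this

theorem pow_mul_diffProd_ne (hq : Function.Injective q) (hxy : x ≠ y)
    (hx : ∀ i, q i ≠ x) (hy : ∀ i, q i ≠ y) {α β : ι → ℕ} {ℓ : ℕ} (hℓ : ℓ ≠ 0) {i : ι}
    (hi : ¬(ℓ : ℤ) ∣ α i - β i) {s t : MvPolynomial S k} (ht : t ≠ 0) :
    s ^ ℓ * diffProd (X x) (X y) (fun i => X (q i)) α β ≠
      t ^ ℓ * diffProd (X x) (X y) (fun i => X (q i)) β α := by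
  classical
  intro h
  have hs : s ≠ 0 := by
    rintro rfl
    rw [zero_pow hℓ, zero_mul, eq_comm, mul_eq_zero] at h
    exact h.elim (pow_ne_zero ℓ ht) (diffProd_X_ne_zero hx hy β α)
  have hπ := prime_X_sub_X (k := k) (hx i).symm
  have := congrArg (multiplicity (X x - X (q i))) h
  rw [hπ.multiplicity_pow_mul hs (diffProd_X_ne_zero hx hy α β),
    hπ.multiplicity_pow_mul ht (diffProd_X_ne_zero hx hy β α),
    multiplicity_X_sub_X_diffProd hq hxy hx hy, multiplicity_X_sub_X_diffProd hq hxy hx hy] at this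
  exact hi ⟨multiplicity (X x - X (q i)) t - multiplicity (X x - X (q i)) s, by linarith⟩

theorem irreducible_of_C_X_sub_X_mul_eq [CharZero k] (hq : Function.Injective q) (hxy : x ≠ y)
    (hx : ∀ i, q i ≠ x) (hy : ∀ i, q i ≠ y) {α β : ι → ℕ} (hαβ : ∀ i, α i = 0 ∨ β i = 0)
    {m : ℕ} (hm : Odd m) (hsum : ∑ i, β i = m + ∑ i, α i)
    (hprime : ∀ ℓ : ℕ, ℓ.Prime → ℓ ∣ m → ∃ i, ¬(ℓ : ℤ) ∣ α i - β i)
    {G : Polynomial (MvPolynomial S k)}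
    (hG : Polynomial.C (X x - X y) * G =
      Polynomial.C (diffProd (X x) (X y) (fun i => X (q i)) α β) *
        (Polynomial.X - Polynomial.C (X x)) ^ m -
      Polynomial.C (diffProd (X x) (X y) (fun i => X (q i)) β α) *
        (Polynomial.X - Polynomial.C (X y)) ^ m) :
    Irreducible G := by
  obtain ⟨i, hi⟩ : ∃ i, α i ≠ β i := by
    by_contra! h
    simp only [h] at hsum
    exact hm.pos.ne' (by omega)
  refine Polynomial.irreducible_of_C_sub_mul_eq hm
    ((IsUnit.mk0 (m : k) (Nat.cast_ne_zero.mpr hm.pos.ne')).map C)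
    (sub_ne_zero.mpr fun h => hxy (X_injective h)) (diffProd_X_ne_zero hx hy α β)
    (diffProd_ne_diffProd hq hxy hx hy hi) (isRelPrime_diffProd hq hxy hx hy hαβ)
    (fun ℓ hℓ hℓm s t ht => ?_) hG
  obtain ⟨i, hi⟩ := hprime ℓ hℓ hℓm
  exact pow_mul_diffProd_ne hq hxy hx hy hℓ.ne_zero hi ht

end LinearForms

variable [Fintype ι] {x y : S} {p : ι → S}

theorem polynomialEquivSubtypeNe_diffProd [DecidableEq S] [DecidableEq ι]
    (hp : Function.Injective p) (hx : ∀ i, p i ≠ x) (hy : ∀ i, p i ≠ y) (α β : ι → ℕ) (j : ι) :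
    polynomialEquivSubtypeNe (p j)
        (diffProd (X x) (X y) (fun i => X (p i)) α β : MvPolynomial S k) =
      (Polynomial.C (X ⟨x, (hx j).symm⟩) - Polynomial.X) ^ α j *
      (Polynomial.C (X ⟨y, (hy j).symm⟩) - Polynomial.X) ^ β j *
      Polynomial.C (diffProd (X ⟨x, (hx j).symm⟩) (X ⟨y, (hy j).symm⟩)
        (fun i : {i // i ≠ j} => X ⟨p i, hp.ne i.2⟩) (fun i => α i) (fun i => β i)) := by
  rw [diffProd_eq_mul_subtype_ne _ _ _ _ _ j, map_mul, map_diffProd Polynomial.C, map_diffProd]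
  have hq : (fun i : {i // i ≠ j} => polynomialEquivSubtypeNe (R := k) (p j) (X (p i))) =
      fun i => Polynomial.C (X ⟨p i, hp.ne i.2⟩) :=
    _root_.funext fun i => polynomialEquivSubtypeNe_X_of_ne (hp.ne i.2)
  simp [hq, (hx j).symm, (hy j).symm]

theorem irreducible_of_X_sub_X_mul_eq_of_odd_of_pos [CharZero k] (hp : Function.Injective p)
    (hxy : x ≠ y) (hx : ∀ i, p i ≠ x) (hy : ∀ i, p i ≠ y) {a : ι → ℤ} (hsum : ∑ i, a i = 0)
    (hprime : ∀ ℓ : ℕ, ℓ.Prime → ∃ i, ¬(ℓ : ℤ) ∣ a i) {j : ι} (hodd : Odd (a j))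
    (hpos : 0 < a j) {G : MvPolynomial S k}
    (hG : (X x - X y) * G =
      diffProd (X x) (X y) (fun i => X (p i)) (fun i => (a i).toNat) (fun i => (-a i).toNat) -
      diffProd (X x) (X y) (fun i => X (p i)) (fun i => (-a i).toNat) (fun i => (a i).toNat)) :
    Irreducible G := by
  classical
  have hm : ((a j).toNat : ℤ) = a j := Int.toNat_of_nonneg hpos.le
  have hmodd : Odd (a j).toNat := by rwa [← Int.odd_coe_nat, hm]
  have hneg (w : MvPolynomial {t // t ≠ p j} k) : (Polynomial.C w - Polynomial.X) ^ (a j).toNat =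
      -(Polynomial.X - Polynomial.C w) ^ (a j).toNat := by
    rw [← neg_sub]
    exact hmodd.neg_pow (Polynomial.X - Polynomial.C w)
  set e := polynomialEquivSubtypeNe (R := k) (p j)
  have hG' := congrArg e hG
  rw [map_mul, map_sub, map_sub, polynomialEquivSubtypeNe_X_of_ne (hx j).symm,
    polynomialEquivSubtypeNe_X_of_ne (hy j).symm, polynomialEquivSubtypeNe_diffProd hp hx hy,
    polynomialEquivSubtypeNe_diffProd hp hx hy, show (-a j).toNat = 0 by omega, pow_zero,
    pow_zero, mul_one, one_mul, ← Polynomial.C_sub, hneg, hneg] at hG'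
  set x' : {t // t ≠ p j} := ⟨x, (hx j).symm⟩
  set y' : {t // t ≠ p j} := ⟨y, (hy j).symm⟩
  set q : {i // i ≠ j} → {t // t ≠ p j} := fun i => ⟨p i, hp.ne i.2⟩
  have hF : Polynomial.C (X x' - X y') * -e G =
      Polynomial.C (diffProd (X x') (X y') (fun i => X (q i)) (fun i => (a i).toNat)
        (fun i => (-a i).toNat)) * (Polynomial.X - Polynomial.C (X x')) ^ (a j).toNat -
      Polynomial.C (diffProd (X x') (X y') (fun i => X (q i)) (fun i => (-a i).toNat)
        (fun i => (a i).toNat)) * (Polynomial.X - Polynomial.C (X y')) ^ (a j).toNat := by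
    linear_combination -hG'
  have key := irreducible_of_C_X_sub_X_mul_eq
    (fun i l h => Subtype.ext (hp (congrArg Subtype.val h)))
    (fun h => hxy (congrArg Subtype.val h)) (fun i h => hx i (congrArg Subtype.val h))
    (fun i h => hy i (congrArg Subtype.val h)) (fun i => by omega) hmodd ?_ ?_ hF
  · exact (MulEquiv.irreducible_iff e.toMulEquiv).mp ((Associated.refl _).neg_left.irreducible key)
  · have hsplit := Fintype.sum_eq_add_sum_subtype_ne a j
    have hparts : ∑ i : {i // i ≠ j}, (((a i).toNat : ℤ) - (-a i).toNat) =
        ∑ i : {i // i ≠ j}, a i :=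
      Finset.sum_congr rfl fun i _ => Int.toNat_sub_toNat_neg _
    rw [Finset.sum_sub_distrib] at hparts
    zify
    linarith
  · intro ℓ hℓ hℓm
    obtain ⟨i, hi⟩ := hprime ℓ hℓ
    have hij : i ≠ j := by
      rintro rfl
      exact hi (hm ▸ Int.natCast_dvd_natCast.mpr hℓm)
    exact ⟨⟨i, hij⟩, by rwa [Int.toNat_sub_toNat_neg]⟩

theorem irreducible_of_X_sub_X_mul_eq [CharZero k] (hp : Function.Injective p)
    (hxy : x ≠ y) (hx : ∀ i, p i ≠ x) (hy : ∀ i, p i ≠ y) {a : ι → ℤ} (hsum : ∑ i, a i = 0)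
    (hprime : ∀ ℓ : ℕ, ℓ.Prime → ∃ i, ¬(ℓ : ℤ) ∣ a i) {G : MvPolynomial S k}
    (hG : (X x - X y) * G =
      diffProd (X x) (X y) (fun i => X (p i)) (fun i => (a i).toNat) (fun i => (-a i).toNat) -
      diffProd (X x) (X y) (fun i => X (p i)) (fun i => (-a i).toNat) (fun i => (a i).toNat)) :
    Irreducible G := by
  obtain ⟨j, hj⟩ := hprime 2 Nat.prime_two
  have hodd : Odd (a j) := Int.odd_iff.mpr (by omega)
  rcases lt_or_gt_of_ne (show a j ≠ 0 by omega) with hneg | hpos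
  · refine (Associated.refl G).neg_left.irreducible (irreducible_of_X_sub_X_mul_eq_of_odd_of_pos
      hp hxy hx hy (a := -a) (j := j) ?_ (fun ℓ hℓ => ?_) hodd.neg (by simpa using hneg) ?_)
    · simp [hsum]
    · obtain ⟨i, hi⟩ := hprime ℓ hℓ
      exact ⟨i, by simpa using hi⟩
    · simp only [Pi.neg_apply, neg_neg]
      linear_combination -hG
  · exact irreducible_of_X_sub_X_mul_eq_of_odd_of_pos hp hxy hx hy hsum hprime hodd hpos hG

end MvPolynomial

/-- over an algebraically closed field of characteristic zero,
`F` is divisible by `p_{n+1} − p_{n+2}` and the quotient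
`G = F / (p_{n+1} − p_{n+2})` is irreducible. -/
theorem stmt_13 {k : Type*} [Field k] [CharZero k] {n : ℕ}
    (a : Fin n → ℤ) (hsum : ∑ i, a i = 0) (hgcd : Finset.univ.gcd a = 1) :
    ∃ G : MvPolynomial (Fin (n + 2)) k,
      Fpoly k n a =
        (X (⟨n, by omega⟩ : Fin (n + 2)) - X (⟨n + 1, by omega⟩ : Fin (n + 2))) * G ∧
      Irreducible G := by
  have hprime (ℓ : ℕ) (hℓ : ℓ.Prime) : ∃ i, ¬(ℓ : ℤ) ∣ a i := by
    by_contra! h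
    have h1 : (ℓ : ℤ) ∣ 1 := hgcd ▸ Finset.dvd_gcd fun i _ => h i
    exact hℓ.not_dvd_one (Int.natCast_dvd_natCast.mp h1)
  obtain ⟨G, hG⟩ := sub_dvd_diffProd_sub_diffProd
    (X (⟨n, by omega⟩ : Fin (n + 2)) : MvPolynomial (Fin (n + 2)) k) (X ⟨n + 1, by omega⟩)
    (fun i => X (Fin.castAdd 2 i)) (fun i => (a i).toNat) (fun i => (-a i).toNat)
  refine ⟨G, hG, irreducible_of_X_sub_X_mul_eq (Fin.castAdd_injective n 2) ?_ ?_ ?_ hsum hprime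
    hG.symm⟩
  all_goals simp [Fin.ext_iff]; try omega
end
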